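/- arXiv:2412.20021 — 8 statements merged into one kernel-verified Lean document; each statement's English description precedes it below -/
import Mathlib

section
/- Novikov algebras satisfy the Dong property: if A is a Novikov algebra over a field k of characteristic 0 with product μ, and a, b, c are pairwise mutually μ-local formal distributions over A, then for every n ∈ ℕ both ordered pairs (a ∘_{μ,n} b, c) and (c, a ∘_{μ,n} b) are μ-local. -/
/-!
Novikov algebras satisfy the Dong property.
-/

/-- The ordered pair of formal distributions `(a, b)` over `A` is `μ`-local:
there is `N` with `(w - z)^N μ(a(w), b(z)) = 0`, encoded coefficient-wise. -/
def IsLocalPair {A : Type*} [AddCommGroup A] (μ : A → A → A) (a b : ℤ → A) : Prop :=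
  ∃ N : ℕ, ∀ m p : ℤ,
    ∑ s ∈ Finset.range (N + 1),
      ((-1 : ℤ) ^ s * (N.choose s : ℤ)) • μ (a (m + (N : ℤ) - (s : ℤ))) (b (p + (s : ℤ))) = 0

/-- The `n`-th `μ`-product `a ∘_{μ,n} b` of formal distributions,
encoding `Res_{ξ=0} (ξ - w)^n μ(a(ξ), b(w))`. -/
def NthProduct {A : Type*} [AddCommGroup A] (μ : A → A → A) (n : ℕ) (a b : ℤ → A) : ℤ → A :=
  fun m => ∑ j ∈ Finset.range (n + 1),
    ((-1 : ℤ) ^ j * (n.choose j : ℤ)) • μ (a ((n : ℤ) - (j : ℤ))) (b (m + (j : ℤ)))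

/-- Three formal distributions `a, b, c` are pairwise mutually `μ`-local. -/
def PairwiseMutuallyLocal {A : Type*} [AddCommGroup A] (μ : A → A → A) (a b c : ℤ → A) : Prop :=
  IsLocalPair μ a b ∧ IsLocalPair μ b a ∧ IsLocalPair μ a c ∧ IsLocalPair μ c a ∧
    IsLocalPair μ b c ∧ IsLocalPair μ c b

/-- `μ : A → A → A` is `k`-bilinear. -/
def IsBilinear (k : Type*) [Field k] {A : Type*} [AddCommGroup A] [Module k A]
    (μ : A → A → A) : Prop :=
  (∀ x y z : A, μ (x + y) z = μ x z + μ y z) ∧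
    (∀ x y z : A, μ x (y + z) = μ x y + μ x z) ∧
    (∀ (r : k) (x y : A), μ (r • x) y = r • μ x y) ∧
    (∀ (r : k) (x y : A), μ x (r • y) = r • μ x y)

/-!
Encode formal distributions in three variables `z₀, z₁, z₂` by their coefficient families
`(Fin 3 → ℤ) → A`. Multiplication by `zᵢ - zⱼ` becomes a difference of two commuting shift
operators, and `μ`-locality of a pair becomes local nilpotence of such an operator on a family.
Right commutativity makes `g = μ(μ(a(z₀), b(z₁)), c(z₂))` local in `(z₀, z₁)` and in `(z₀, z₂)`,
hence in `(z₁, z₂)`, because `z₁ - z₂ = (z₀ - z₂) - (z₀ - z₁)` and the vectors on which two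
commuting operators are locally nilpotent are also killed by a power of their difference. The
`n`-th product is `Res_{z₀} (z₀ - z₁)ⁿ g`, and `z₀ - z₁` commutes with `z₁ - z₂`, which gives the
locality of `(a ∘ₙ b, c)`. For `(c, a ∘ₙ b)`, the Novikov identities rewrite
`μ(c, μ(a, b))` as `μ(μ(c, b), a) - μ(μ(a, b), c) + μ(a, μ(c, b))`, and each term is local in
`(z₂, z₁)`, by the locality of `(c, b)` or by the first part.
-/

open Finset fwdDiff_aux

section Shift

variable {ι A : Type*} [AddCommMonoid ι] [AddCommGroup A]

theorem commute_shiftₗ (v w : ι) : Commute (shiftₗ ι A v) (shiftₗ ι A w) := by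
  refine LinearMap.ext fun u => funext fun x => ?_
  simp only [Module.End.mul_apply, shiftₗ_apply, add_right_comm]

theorem shiftₗ_sub_shiftₗ_pow_apply (v w : ι) (N : ℕ) (u : ι → A) (x : ι) :
    ((shiftₗ ι A v - shiftₗ ι A w) ^ N) u x =
      ∑ s ∈ range (N + 1), ((-1 : ℤ) ^ s * N.choose s) • u (x + (N - s) • v + s • w) := by
  rw [sub_eq_neg_add, ((commute_shiftₗ (A := A) w v).neg_left).add_pow, LinearMap.sum_apply,
    Finset.sum_apply]
  refine sum_congr rfl fun s _ => ?_
  have hcoeff : (-shiftₗ ι A w) ^ s * shiftₗ ι A v ^ (N - s) * N.choose s =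
      ((-1 : ℤ) ^ s * N.choose s : ℤ) * (shiftₗ ι A w ^ s * shiftₗ ι A v ^ (N - s)) := by
    rw [neg_pow, mul_assoc, mul_assoc, ← Nat.cast_comm, ← mul_assoc (shiftₗ ι A w ^ s),
      ← Nat.cast_comm]
    push_cast
    simp only [mul_assoc]
  rw [hcoeff, Module.End.mul_apply, Module.End.intCast_apply, Pi.smul_apply,
    Module.End.mul_apply, shiftₗ_pow_apply, shiftₗ_pow_apply, add_right_comm]

end Shift

theorem Commute.mem_maxGenEigenspace_zero_sub {R M : Type*} [CommRing R] [AddCommGroup M]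
    [Module R M] {f g : Module.End R M} (hfg : Commute f g) {u : M}
    (hf : u ∈ f.maxGenEigenspace 0) (hg : u ∈ g.maxGenEigenspace 0) :
    u ∈ (f - g).maxGenEigenspace 0 := by
  simp only [Module.End.mem_maxGenEigenspace, zero_smul, sub_zero] at hf hg ⊢
  obtain ⟨m, hm⟩ := hf
  obtain ⟨n, hn⟩ := hg
  have hneg : ((-g) ^ n) u = 0 := by rw [neg_pow, Module.End.mul_apply, hn, map_zero]
  refine ⟨m + n, ?_⟩
  rw [sub_eq_add_neg]
  -- the annihilator of `u` is a left ideal of `Module.End R M`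
  exact Ideal.add_pow_mem_of_pow_mem_of_le_of_commute
    (LinearMap.ker (LinearMap.toSpanSingleton (Module.End R M) M u)) hm hneg (by omega)
    hfg.neg_right

theorem novikov_left_mul_eq {A : Type*} [AddCommGroup A] {μ : A → A → A}
    (hlsym : ∀ x y z : A, μ (μ x y) z - μ x (μ y z) = μ (μ y x) z - μ y (μ x z))
    (hrcom : ∀ x y z : A, μ (μ x y) z = μ (μ x z) y) (x y z : A) :
    μ z (μ x y) = μ (μ z y) x - μ (μ x y) z + μ x (μ z y) := by
  have h := hlsym z x y
  rw [hrcom z x y, hrcom x z y] at h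
  calc μ z (μ x y) = μ (μ z y) x - (μ (μ z y) x - μ z (μ x y)) := by abel
    _ = _ := by rw [h]; abel

namespace FormalDistribution

section MulVarSub

variable (A : Type*) [AddCommGroup A]

/-- Multiplication by `zᵢ - zⱼ`, where `u x` is the coefficient of
`z₀ ^ (-x 0 - 1) * z₁ ^ (-x 1 - 1) * z₂ ^ (-x 2 - 1)`. -/
def mulVarSub (i j : Fin 3) : Module.End ℤ ((Fin 3 → ℤ) → A) :=
  shiftₗ (Fin 3 → ℤ) A (Pi.single i 1) - shiftₗ (Fin 3 → ℤ) A (Pi.single j 1)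

theorem commute_mulVarSub (i j k l : Fin 3) : Commute (mulVarSub A i j) (mulVarSub A k l) :=
  ((commute_shiftₗ _ _).sub_right (commute_shiftₗ _ _)).sub_left
    ((commute_shiftₗ _ _).sub_right (commute_shiftₗ _ _))

theorem mulVarSub_sub_mulVarSub (i j k : Fin 3) :
    mulVarSub A i j - mulVarSub A i k = mulVarSub A k j := by
  simp only [mulVarSub]; abel

variable {A}

theorem mulVarSub_pow_apply (i j : Fin 3) (N : ℕ) (u : (Fin 3 → ℤ) → A) (x : Fin 3 → ℤ) :
    ((mulVarSub A i j ^ N) u) x = ∑ s ∈ range (N + 1), ((-1 : ℤ) ^ s * N.choose s) •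
      u (x + Pi.single i ((N : ℤ) - s) + Pi.single j (s : ℤ)) := by
  rw [mulVarSub, shiftₗ_sub_shiftₗ_pow_apply]
  refine sum_congr rfl fun s hs => ?_
  rw [← Pi.single_smul', ← Pi.single_smul', nsmul_one, nsmul_one,
    Nat.cast_sub (Nat.lt_succ_iff.mp (mem_range.mp hs))]

theorem mem_maxGenEigenspace_mulVarSub {R : Type*} [CommSemiring R] [Module R A]
    (μ : A →ₗ[R] A →ₗ[R] A) {a b : ℤ → A} (hab : IsLocalPair (μ · ·) a b) {i j k : Fin 3}
    (hij : i ≠ j) (hki : k ≠ i) (hkj : k ≠ j) (ψ : ℤ → A →ₗ[R] A) :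
    (fun x => ψ (x k) (μ (a (x i)) (b (x j)))) ∈ (mulVarSub A i j).maxGenEigenspace 0 := by
  obtain ⟨N, hN⟩ := hab
  rw [Module.End.mem_maxGenEigenspace, zero_smul, sub_zero]
  refine ⟨N, funext fun x => ?_⟩
  rw [mulVarSub_pow_apply, Pi.zero_apply, ← map_zero (ψ (x k)), ← hN (x i) (x j), map_sum]
  refine sum_congr rfl fun s _ => ?_
  simp [hij, hij.symm, hki, hkj, add_sub_assoc]

theorem mulVarSub_pow_apply_eq_nthProduct {R : Type*} [CommSemiring R] [Module R A]
    (μ : A →ₗ[R] A →ₗ[R] A) (a b : ℤ → A) (ψ : ℤ → A →ₗ[R] A) (n : ℕ) {x : Fin 3 → ℤ}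
    (hx : x 0 = 0) :
    (mulVarSub A 0 1 ^ n) (fun x => ψ (x 2) (μ (a (x 0)) (b (x 1)))) x =
      ψ (x 2) (NthProduct (μ · ·) n a b (x 1)) := by
  rw [mulVarSub_pow_apply, NthProduct, map_sum]
  refine sum_congr rfl fun j _ => ?_
  simp [hx]

theorem isLocalPair_of_mem_maxGenEigenspace (μ : A → A → A) {f g : ℤ → A}
    {u : (Fin 3 → ℤ) → A} {i j k : Fin 3} (hij : i ≠ j) (hki : k ≠ i) (hkj : k ≠ j)
    (hu : u ∈ (mulVarSub A i j).maxGenEigenspace 0)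
    (hfg : ∀ x, x k = 0 → u x = μ (f (x i)) (g (x j))) : IsLocalPair μ f g := by
  obtain ⟨N, hN⟩ := (Module.End.mem_maxGenEigenspace _ _ _).mp hu
  refine ⟨N, fun m p => ?_⟩
  have := congrFun hN (Pi.single i m + Pi.single j p)
  rw [zero_smul, sub_zero, mulVarSub_pow_apply, Pi.zero_apply] at this
  rw [← this]
  refine sum_congr rfl fun s _ => ?_
  rw [hfg _ (by simp [hki, hkj])]
  simp [hij, hij.symm, add_sub_assoc]

end MulVarSub

section Novikov

variable {R A : Type*} [CommSemiring R] [AddCommGroup A] [Module R A] (μ : A →ₗ[R] A →ₗ[R] A)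
  {a b c : ℤ → A}

theorem mem_maxGenEigenspace_mulVarSub_of_rightComm
    (hrcom : ∀ x y z : A, μ (μ x y) z = μ (μ x z) y)
    (hab : IsLocalPair (μ · ·) a b) (hac : IsLocalPair (μ · ·) a c) :
    (fun x => μ (μ (a (x 0)) (b (x 1))) (c (x 2))) ∈ (mulVarSub A 0 1).maxGenEigenspace 0 ∧
      (fun x => μ (μ (a (x 0)) (b (x 1))) (c (x 2))) ∈ (mulVarSub A 0 2).maxGenEigenspace 0 := by
  refine ⟨mem_maxGenEigenspace_mulVarSub μ hab (k := 2) (by decide) (by decide) (by decide)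
    fun t => μ.flip (c t), ?_⟩
  simp only [hrcom _ (b _)]
  exact mem_maxGenEigenspace_mulVarSub μ hac (k := 1) (by decide) (by decide) (by decide)
    fun t => μ.flip (b t)

theorem isLocalPair_nthProduct_left (hrcom : ∀ x y z : A, μ (μ x y) z = μ (μ x z) y)
    (hab : IsLocalPair (μ · ·) a b) (hac : IsLocalPair (μ · ·) a c) (n : ℕ) :
    IsLocalPair (μ · ·) (NthProduct (μ · ·) n a b) c := by
  obtain ⟨h01, h02⟩ := mem_maxGenEigenspace_mulVarSub_of_rightComm μ hrcom hab hac
  have h12 := (commute_mulVarSub A 0 2 0 1).mem_maxGenEigenspace_zero_sub h02 h01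
  rw [mulVarSub_sub_mulVarSub] at h12
  refine isLocalPair_of_mem_maxGenEigenspace (μ · ·) (i := 1) (j := 2) (k := 0) (by decide)
    (by decide) (by decide) (Module.End.mapsTo_maxGenEigenspace_of_comm
      ((commute_mulVarSub A 1 2 0 1).pow_right n) 0 h12) fun x hx => ?_
  exact mulVarSub_pow_apply_eq_nthProduct μ a b (fun t => μ.flip (c t)) n hx

theorem isLocalPair_nthProduct_right
    (hlsym : ∀ x y z : A, μ (μ x y) z - μ x (μ y z) = μ (μ y x) z - μ y (μ x z))
    (hrcom : ∀ x y z : A, μ (μ x y) z = μ (μ x z) y)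
    (hab : IsLocalPair (μ · ·) a b) (hac : IsLocalPair (μ · ·) a c)
    (hcb : IsLocalPair (μ · ·) c b) (n : ℕ) :
    IsLocalPair (μ · ·) c (NthProduct (μ · ·) n a b) := by
  obtain ⟨h01, h02⟩ := mem_maxGenEigenspace_mulVarSub_of_rightComm μ hrcom hab hac
  have h21 := (commute_mulVarSub A 0 1 0 2).mem_maxGenEigenspace_zero_sub h01 h02
  rw [mulVarSub_sub_mulVarSub] at h21
  have hv1 := mem_maxGenEigenspace_mulVarSub μ hcb (i := 2) (j := 1) (k := 0) (by decide)
    (by decide) (by decide) fun t => μ.flip (a t)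
  have hv3 := mem_maxGenEigenspace_mulVarSub μ hcb (i := 2) (j := 1) (k := 0) (by decide)
    (by decide) (by decide) fun t => μ (a t)
  have h := add_mem (sub_mem hv1 h21) hv3
  have hsplit : ((fun x : Fin 3 → ℤ => μ.flip (a (x 0)) (μ (c (x 2)) (b (x 1)))) -
      (fun x => μ (μ (a (x 0)) (b (x 1))) (c (x 2))) +
      fun x => μ (a (x 0)) (μ (c (x 2)) (b (x 1)))) =
        fun x => μ (c (x 2)) (μ (a (x 0)) (b (x 1))) :=
    funext fun x => (novikov_left_mul_eq (μ := (μ · ·)) hlsym hrcom _ _ _).symm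
  rw [hsplit] at h
  refine isLocalPair_of_mem_maxGenEigenspace (μ · ·) (i := 2) (j := 1) (k := 0) (by decide)
    (by decide) (by decide) (Module.End.mapsTo_maxGenEigenspace_of_comm
      ((commute_mulVarSub A 2 1 0 1).pow_right n) 0 h) fun x hx => ?_
  exact mulVarSub_pow_apply_eq_nthProduct μ a b (fun t => μ (c t)) n hx

end Novikov

end FormalDistribution

theorem novikov_dong_property_general (k : Type*) [Field k]
    (A : Type*) [AddCommGroup A] [Module k A]
    (μ : A → A → A) (hbil : IsBilinear k μ)
    (hlsym : ∀ x y z : A, μ (μ x y) z - μ x (μ y z) = μ (μ y x) z - μ y (μ x z))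
    (hrcom : ∀ x y z : A, μ (μ x y) z = μ (μ x z) y)
    (a b c : ℤ → A) (hloc : PairwiseMutuallyLocal μ a b c) (n : ℕ) :
    IsLocalPair μ (NthProduct μ n a b) c ∧ IsLocalPair μ c (NthProduct μ n a b) := by
  obtain ⟨hadd_left, hadd_right, hsmul_left, hsmul_right⟩ := hbil
  obtain ⟨hab, -, hac, -, -, hcb⟩ := hloc
  let B := LinearMap.mk₂ k μ hadd_left hsmul_left hadd_right hsmul_right
  exact ⟨FormalDistribution.isLocalPair_nthProduct_left B hrcom hab hac n,
    FormalDistribution.isLocalPair_nthProduct_right B hlsym hrcom hab hac hcb n⟩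

/-- Novikov algebras satisfy the Dong property. -/
theorem novikov_dong_property (k : Type*) [Field k] [CharZero k]
    (A : Type*) [AddCommGroup A] [Module k A]
    (μ : A → A → A) (hbil : IsBilinear k μ)
    (hlsym : ∀ x y z : A, μ (μ x y) z - μ x (μ y z) = μ (μ y x) z - μ y (μ x z))
    (hrcom : ∀ x y z : A, μ (μ x y) z = μ (μ x z) y)
    (a b c : ℤ → A) (hloc : PairwiseMutuallyLocal μ a b c) (n : ℕ) :
    IsLocalPair μ (NthProduct μ n a b) c ∧ IsLocalPair μ c (NthProduct μ n a b) :=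
  novikov_dong_property_general k A μ hbil hlsym hrcom a b c hloc n
end

section
/- Poisson algebras satisfy the Dong property: if A is a Poisson algebra over a field k of characteristic 0 with commutative associative product m and Lie bracket β, and a, b, c are pairwise mutually F-local formal distributions over A for the family F = {m, β}, then for every n ∈ ℕ and every μ, ν ∈ F both ordered pairs (a ∘_{μ,n} b, c) and (c, a ∘_{μ,n} b) are ν-local. -/
open Finset

section DongCore

lemma PD.sub_pow_zsmul {R : Type*} [Ring R] (p q : R) (h : Commute p q) (e : ℕ) :
    (p - q) ^ e = ∑ s ∈ range (e + 1),
      ((-1 : ℤ) ^ s * (e.choose s : ℤ)) • (p ^ (e - s) * q ^ s) := by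
  have h2 : Commute p (-q) := h.neg_right
  rw [sub_eq_add_neg, h2.add_pow e, ← Finset.sum_range_reflect]
  refine Finset.sum_congr rfl ?_
  intro s hs
  rw [Finset.mem_range] at hs
  have hs' : s ≤ e := by omega
  have h4 : e + 1 - 1 - s = e - s := by omega
  have h3 : e - (e - s) = s := by omega
  rw [h4, h3, neg_pow, Nat.choose_symm hs', zsmul_eq_mul]
  push_cast
  rw [← mul_assoc (p ^ (e-s)), ← ((Commute.neg_one_left (p^(e-s))).pow_left s).eq,
    mul_assoc ((-1:R)^s) ((e.choose s : R)), (Nat.cast_commute (e.choose s) (p^(e-s) * q^s)).eq,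
    mul_assoc (p^(e-s)), mul_assoc ((-1:R)^s), mul_assoc ((-1:R)^s), mul_assoc]

lemma PD.mono_mul {R : Type*} [Ring R] (x y : R) (h : Commute x y) (e f e' f' : ℕ) :
    (x ^ e * y ^ f) * (x ^ e' * y ^ f') = x ^ (e + e') * y ^ (f + f') := by
  rw [mul_assoc, ← mul_assoc (y ^ f), ← (h.pow_pow e' f).eq, mul_assoc (x ^ e'),
    ← mul_assoc, ← pow_add, ← pow_add]

lemma PD.add_pow_nat_zsmul {R : Type*} [Ring R] (x y : R) (h : Commute x y) (e : ℕ) :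
    (x + y) ^ e = ∑ s ∈ range (e + 1), ((e.choose s : ℤ)) • (x ^ s * y ^ (e - s)) := by
  rw [h.add_pow e]
  refine Finset.sum_congr rfl ?_
  intro s _
  rw [zsmul_eq_mul, Int.cast_natCast, (Nat.cast_commute (e.choose s) (x^s * y^(e-s))).eq]

lemma PD.end_smul_apply {V : Type*} [AddCommGroup V] (c : ℤ) (f : Module.End ℤ V) (v : V) :
    (c • f) v = c • f v := rfl

/-- Abstract core of Dong's lemma. -/
lemma PD.dong_core {V : Type*} [AddCommGroup V]
    (x y : Module.End ℤ V) (hxy : Commute x y) (N : ℕ)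
    (F G H : V) (hFGH : F = G + H)
    (hF : (x ^ N) F = 0) (hG : (y ^ N) G = 0) (hH : ((x + y) ^ N) H = 0) :
    ∀ n : ℕ, (y ^ (5 * N + 2) * x ^ n) F = 0 := by
  intro n
  by_cases hN0 : N = 0
  · subst hN0
    simp only [pow_zero, Module.End.one_apply] at hF
    rw [hF, map_zero]
  have hN1 : 1 ≤ N := by omega
  set K := 2 * N + 1 with hK
  have killFv : ∀ e f : ℕ, N ≤ e → (x ^ e * y ^ f) F = 0 := by
    intro e f he
    have h1 : x ^ e * y ^ f = x ^ (e - N) * y ^ f * x ^ N := by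
      rw [mul_assoc, ← (hxy.pow_pow N f).eq, ← mul_assoc, ← pow_add]
      congr 2
      omega
    rw [h1, Module.End.mul_apply, hF, map_zero]
  have killGv : ∀ e f : ℕ, N ≤ f → (x ^ e * y ^ f) G = 0 := by
    intro e f hf
    have h1 : x ^ e * y ^ f = x ^ e * y ^ (f - N) * y ^ N := by
      rw [mul_assoc (x ^ e), ← pow_add]
      congr 2
      omega
    rw [h1, Module.End.mul_apply, hG, map_zero]
  have SA : ((x + y) ^ K) F
      = ∑ i ∈ range N, ((K.choose i : ℤ)) • ((x ^ i * y ^ (K - i)) F) := by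
    rw [PD.add_pow_nat_zsmul x y hxy K, LinearMap.sum_apply]
    refine (Finset.sum_subset (Finset.range_subset_range.mpr (by omega : N ≤ K + 1)) ?_).symm.trans ?_
    · intro i _ hi
      rw [Finset.mem_range, not_lt] at hi
      rw [PD.end_smul_apply, killFv i (K - i) hi, smul_zero]
    · exact Finset.sum_congr rfl fun i _ => (PD.end_smul_apply _ _ _)
  have SH : ((x + y) ^ K) H = 0 := by
    have h1 : (x + y) ^ K = (x + y) ^ (K - N) * (x + y) ^ N := by
      rw [← pow_add]; congr 1; omega
    rw [h1, Module.End.mul_apply, hH, map_zero]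
  have EQ1 : ∑ i ∈ range N, ((K.choose i : ℤ)) • ((x ^ i * y ^ (K - i)) F)
      = ((x + y) ^ K) G := by
    rw [← SA, hFGH, map_add, SH, add_zero]
  have hyG : ∀ i' : ℕ, i' < N → (x ^ i' * y ^ (K - i')) (((x + y) ^ K) G) = 0 := by
    intro i' _
    rw [PD.add_pow_nat_zsmul x y hxy K, LinearMap.sum_apply, map_sum]
    refine Finset.sum_eq_zero ?_
    intro t _
    rw [PD.end_smul_apply, map_zsmul, ← Module.End.mul_apply,
      PD.mono_mul x y hxy i' (K - i') t (K - t), killGv _ _ (by omega), smul_zero]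
  have EQ2 : ∑ i' ∈ range N, ∑ i ∈ range N,
      ((K.choose i' : ℤ) * (K.choose i : ℤ)) •
        ((x ^ (i' + i) * y ^ ((K - i') + (K - i))) F) = 0 := by
    have step : ∀ i' ∈ range N, ∑ i ∈ range N,
        ((K.choose i' : ℤ) * (K.choose i : ℤ)) •
          ((x ^ (i' + i) * y ^ ((K - i') + (K - i))) F)
        = (K.choose i' : ℤ) • ((x ^ i' * y ^ (K - i')) (((x + y) ^ K) G)) := by
      intro i' hi'
      rw [← EQ1, map_sum, Finset.smul_sum]
      refine Finset.sum_congr rfl ?_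
      intro i _
      rw [map_zsmul, ← Module.End.mul_apply, PD.mono_mul x y hxy i' (K - i') i (K - i),
        smul_smul]
    rw [Finset.sum_congr rfl step]
    refine Finset.sum_eq_zero ?_
    intro i' hi'
    rw [Finset.mem_range] at hi'
    rw [hyG i' hi', smul_zero]
  have claim : ∀ t, t < N → ∀ e : ℕ, 2 * K + t ≤ e → (x ^ (N - 1 - t) * y ^ e) F = 0 := by
    intro t
    induction t using Nat.strong_induction_on with
    | _ t IH =>
      intro ht e he
      have happ := congrArg (fun v => (x ^ (N - 1 - t) * y ^ (e - 2 * K)) v) EQ2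
      simp only [map_zero] at happ
      rw [map_sum] at happ
      have hsum : ∑ i' ∈ range N, ∑ i ∈ range N,
          ((K.choose i' : ℤ) * (K.choose i : ℤ)) •
            ((x ^ ((N - 1 - t) + (i' + i)) * y ^ ((e - 2 * K) + ((K - i') + (K - i)))) F) = 0 := by
        rw [← happ]
        refine Finset.sum_congr rfl fun i' _ => ?_
        rw [map_sum]
        refine Finset.sum_congr rfl fun i _ => ?_
        rw [map_zsmul, ← Module.End.mul_apply, PD.mono_mul x y hxy]
      have hvanish : ∀ i' ∈ range N, ∀ i ∈ range N, (i' ≠ 0 ∨ i ≠ 0) →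
          ((K.choose i' : ℤ) * (K.choose i : ℤ)) •
            ((x ^ ((N - 1 - t) + (i' + i)) * y ^ ((e - 2 * K) + ((K - i') + (K - i)))) F) = 0 := by
        intro i' hi' i hi hne
        rw [Finset.mem_range] at hi' hi
        by_cases hd : t < i' + i
        · rw [killFv _ _ (by omega), smul_zero]
        · push_neg at hd
          have hd1 : 1 ≤ i' + i := by omega
          have hx : (N - 1 - t) + (i' + i) = N - 1 - (t - (i' + i)) := by omega
          have hy' : (e - 2 * K) + ((K - i') + (K - i)) = e - (i' + i) := by omega
          rw [hx, hy', IH (t - (i' + i)) (by omega) (by omega) (e - (i' + i)) (by omega),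
            smul_zero]
      have houter : (∑ i' ∈ range N, ∑ i ∈ range N,
          ((K.choose i' : ℤ) * (K.choose i : ℤ)) •
            ((x ^ ((N - 1 - t) + (i' + i)) * y ^ ((e - 2 * K) + ((K - i') + (K - i)))) F))
          = ∑ i ∈ range N,
          ((K.choose 0 : ℤ) * (K.choose i : ℤ)) •
            ((x ^ ((N - 1 - t) + (0 + i)) * y ^ ((e - 2 * K) + ((K - 0) + (K - i)))) F) :=
        Finset.sum_eq_single_of_mem 0 (Finset.mem_range.mpr (by omega))
          (fun b hb hbne => Finset.sum_eq_zero fun i hi => hvanish b hb i hi (Or.inl hbne))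
      have hinner : (∑ i ∈ range N,
          ((K.choose 0 : ℤ) * (K.choose i : ℤ)) •
            ((x ^ ((N - 1 - t) + (0 + i)) * y ^ ((e - 2 * K) + ((K - 0) + (K - i)))) F))
          = ((K.choose 0 : ℤ) * (K.choose 0 : ℤ)) •
            ((x ^ ((N - 1 - t) + (0 + 0)) * y ^ ((e - 2 * K) + ((K - 0) + (K - 0)))) F) :=
        Finset.sum_eq_single_of_mem 0 (Finset.mem_range.mpr (by omega))
          (fun i hi hine => hvanish 0 (Finset.mem_range.mpr (by omega)) i hi (Or.inr hine))
      have h00 := (hinner.symm.trans (houter.symm.trans hsum))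
      have hc0 : ((K.choose 0 : ℤ) * (K.choose 0 : ℤ)) = 1 := by simp
      rw [hc0, one_zsmul] at h00
      have hx0 : (N - 1 - t) + (0 + 0) = N - 1 - t := by omega
      have hy0 : (e - 2 * K) + ((K - 0) + (K - 0)) = e := by omega
      rw [hx0, hy0] at h00
      exact h00
  have hfin : (y ^ (5 * N + 2)) F = 0 := by
    have h1 := claim (N - 1) (by omega) (5 * N + 2) (by omega)
    have hz : N - 1 - (N - 1) = 0 := by omega
    rw [hz, pow_zero, one_mul] at h1
    exact h1
  rw [(hxy.symm.pow_pow (5 * N + 2) n).eq, Module.End.mul_apply, hfin, map_zero]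

end DongCore

section Shifts
variable {A : Type*} [AddCommGroup A]

def PD.sh1 : Module.End ℤ (ℤ → ℤ → ℤ → A) where
  toFun F := fun i j k => F (i + 1) j k
  map_add' _ _ := rfl
  map_smul' _ _ := rfl

def PD.sh2 : Module.End ℤ (ℤ → ℤ → ℤ → A) where
  toFun F := fun i j k => F i (j + 1) k
  map_add' _ _ := rfl
  map_smul' _ _ := rfl

def PD.sh3 : Module.End ℤ (ℤ → ℤ → ℤ → A) where
  toFun F := fun i j k => F i j (k + 1)
  map_add' _ _ := rfl
  map_smul' _ _ := rfl

lemma PD.sh1_pow (e : ℕ) (F : ℤ → ℤ → ℤ → A) (i j k : ℤ) :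
    (((PD.sh1 (A := A)) ^ e) F) i j k = F (i + e) j k := by
  induction e generalizing F with
  | zero => simp
  | succ e IH =>
    rw [pow_succ, Module.End.mul_apply, IH (PD.sh1 (A := A) F)]
    show F (i + e + 1) j k = _
    congr 1
    push_cast
    ring

lemma PD.sh2_pow (e : ℕ) (F : ℤ → ℤ → ℤ → A) (i j k : ℤ) :
    (((PD.sh2 (A := A)) ^ e) F) i j k = F i (j + e) k := by
  induction e generalizing F with
  | zero => simp
  | succ e IH =>
    rw [pow_succ, Module.End.mul_apply, IH (PD.sh2 (A := A) F)]
    show F i (j + e + 1) k = _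
    congr 1
    push_cast
    ring

lemma PD.sh3_pow (e : ℕ) (F : ℤ → ℤ → ℤ → A) (i j k : ℤ) :
    (((PD.sh3 (A := A)) ^ e) F) i j k = F i j (k + e) := by
  induction e generalizing F with
  | zero => simp
  | succ e IH =>
    rw [pow_succ, Module.End.mul_apply, IH (PD.sh3 (A := A) F)]
    show F i j (k + e + 1) = _
    congr 1
    push_cast
    ring

lemma PD.c12 : Commute (PD.sh1 (A := A)) PD.sh2 := rfl
lemma PD.c13 : Commute (PD.sh1 (A := A)) PD.sh3 := rfl
lemma PD.c23 : Commute (PD.sh2 (A := A)) PD.sh3 := rfl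

def PD.x : Module.End ℤ (ℤ → ℤ → ℤ → A) := PD.sh1 - PD.sh2
def PD.y : Module.End ℤ (ℤ → ℤ → ℤ → A) := PD.sh2 - PD.sh3
def PD.z : Module.End ℤ (ℤ → ℤ → ℤ → A) := PD.sh1 - PD.sh3
lemma PD.x_def : PD.x (A := A) = PD.sh1 - PD.sh2 := rfl
lemma PD.y_def : PD.y (A := A) = PD.sh2 - PD.sh3 := rfl
lemma PD.z_def : PD.z (A := A) = PD.sh1 - PD.sh3 := rfl

lemma PD.op12_apply (e : ℕ) (F : ℤ → ℤ → ℤ → A) (i j k : ℤ) :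
    ((PD.x (A := A) ^ e) F) i j k
      = ∑ s ∈ range (e + 1), ((-1 : ℤ) ^ s * (e.choose s : ℤ)) •
          F (i + (e : ℤ) - (s : ℤ)) (j + (s : ℤ)) k := by
  rw [PD.x_def, PD.sub_pow_zsmul _ _ PD.c12 e, LinearMap.sum_apply, Finset.sum_apply,
    Finset.sum_apply, Finset.sum_apply]
  refine Finset.sum_congr rfl ?_
  intro s hs
  rw [Finset.mem_range] at hs
  rw [PD.end_smul_apply, Module.End.mul_apply]
  show ((-1 : ℤ) ^ s * (e.choose s : ℤ)) •
      ((PD.sh1 (A := A) ^ (e - s)) ((PD.sh2 (A := A) ^ s) F)) i j k = _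
  rw [PD.sh1_pow, PD.sh2_pow]
  congr 2
  omega

lemma PD.op23_apply (e : ℕ) (F : ℤ → ℤ → ℤ → A) (i j k : ℤ) :
    ((PD.y (A := A) ^ e) F) i j k
      = ∑ s ∈ range (e + 1), ((-1 : ℤ) ^ s * (e.choose s : ℤ)) •
          F i (j + (e : ℤ) - (s : ℤ)) (k + (s : ℤ)) := by
  rw [PD.y_def, PD.sub_pow_zsmul _ _ PD.c23 e, LinearMap.sum_apply, Finset.sum_apply,
    Finset.sum_apply, Finset.sum_apply]
  refine Finset.sum_congr rfl ?_
  intro s hs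
  rw [Finset.mem_range] at hs
  rw [PD.end_smul_apply, Module.End.mul_apply]
  show ((-1 : ℤ) ^ s * (e.choose s : ℤ)) •
      ((PD.sh2 (A := A) ^ (e - s)) ((PD.sh3 (A := A) ^ s) F)) i j k = _
  rw [PD.sh2_pow, PD.sh3_pow]
  congr 2
  omega

lemma PD.op13_apply (e : ℕ) (F : ℤ → ℤ → ℤ → A) (i j k : ℤ) :
    ((PD.z (A := A) ^ e) F) i j k
      = ∑ s ∈ range (e + 1), ((-1 : ℤ) ^ s * (e.choose s : ℤ)) •
          F (i + (e : ℤ) - (s : ℤ)) j (k + (s : ℤ)) := by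
  rw [PD.z_def, PD.sub_pow_zsmul _ _ PD.c13 e, LinearMap.sum_apply, Finset.sum_apply,
    Finset.sum_apply, Finset.sum_apply]
  refine Finset.sum_congr rfl ?_
  intro s hs
  rw [Finset.mem_range] at hs
  rw [PD.end_smul_apply, Module.End.mul_apply]
  show ((-1 : ℤ) ^ s * (e.choose s : ℤ)) •
      ((PD.sh1 (A := A) ^ (e - s)) ((PD.sh3 (A := A) ^ s) F)) i j k = _
  rw [PD.sh1_pow, PD.sh3_pow]
  congr 2
  omega

end Shifts

section Main
variable {A : Type*} [AddCommGroup A]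

/-- The master concrete Dong lemma. -/
lemma PD.dong_main (μ ψ ρ : A → A → A) (U S T : ℤ → A → A)
    (hU : ∀ k u v, U k (u + v) = U k u + U k v)
    (hS : ∀ i u v, S i (u + v) = S i u + S i v)
    (hT : ∀ j u v, T j (u + v) = T j u + T j v)
    (a b c : ℤ → A)
    (hab : IsLocalPair μ a b) (hbc : IsLocalPair ψ b c) (hac : IsLocalPair ρ a c)
    (hdec : ∀ i j k : ℤ, U k (μ (a i) (b j)) = S i (ψ (b j) (c k)) + T j (ρ (a i) (c k)))
    (n : ℕ) :
    ∃ M : ℕ, ∀ m p : ℤ,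
      ∑ s ∈ range (M + 1), ((-1 : ℤ) ^ s * (M.choose s : ℤ)) •
        (∑ j ∈ range (n + 1), ((-1 : ℤ) ^ j * (n.choose j : ℤ)) •
          U (p + (s : ℤ)) (μ (a ((n : ℤ) - (j : ℤ))) (b (m + (M : ℤ) - (s : ℤ) + (j : ℤ))))) = 0 := by
  obtain ⟨N1, h1⟩ := hab
  obtain ⟨N2, h2⟩ := hbc
  obtain ⟨N3, h3⟩ := hac
  set F : ℤ → ℤ → ℤ → A := fun i j k => U k (μ (a i) (b j)) with hFdef
  set G : ℤ → ℤ → ℤ → A := fun i j k => S i (ψ (b j) (c k)) with hGdef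
  set H : ℤ → ℤ → ℤ → A := fun i j k => T j (ρ (a i) (c k)) with hHdef
  set N := max N1 (max N2 N3) with hN
  -- operator-level locality
  have hFop : ((PD.x (A := A)) ^ N1) F = 0 := by
    funext i j k
    rw [PD.op12_apply]
    show ∑ s ∈ range (N1 + 1), ((-1 : ℤ) ^ s * (N1.choose s : ℤ)) •
      U k (μ (a (i + (N1 : ℤ) - s)) (b (j + s))) = (0 : A)
    have hpull : ∀ s ∈ range (N1 + 1), ((-1 : ℤ) ^ s * (N1.choose s : ℤ)) •
        U k (μ (a (i + (N1 : ℤ) - s)) (b (j + s)))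
        = (AddMonoidHom.mk' (U k) (hU k))
            (((-1 : ℤ) ^ s * (N1.choose s : ℤ)) • μ (a (i + (N1 : ℤ) - s)) (b (j + s))) := by
      intro s _
      rw [map_zsmul]
      rfl
    rw [Finset.sum_congr rfl hpull, ← map_sum, h1 i j, map_zero]
  have hGop : ((PD.y (A := A)) ^ N2) G = 0 := by
    funext i j k
    rw [PD.op23_apply]
    show ∑ s ∈ range (N2 + 1), ((-1 : ℤ) ^ s * (N2.choose s : ℤ)) •
      S i (ψ (b (j + (N2 : ℤ) - s)) (c (k + s))) = (0 : A)
    have hpull : ∀ s ∈ range (N2 + 1), ((-1 : ℤ) ^ s * (N2.choose s : ℤ)) •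
        S i (ψ (b (j + (N2 : ℤ) - s)) (c (k + s)))
        = (AddMonoidHom.mk' (S i) (hS i))
            (((-1 : ℤ) ^ s * (N2.choose s : ℤ)) • ψ (b (j + (N2 : ℤ) - s)) (c (k + s))) := by
      intro s _
      rw [map_zsmul]
      rfl
    rw [Finset.sum_congr rfl hpull, ← map_sum, h2 j k, map_zero]
  have hHop : ((PD.z (A := A)) ^ N3) H = 0 := by
    funext i j k
    rw [PD.op13_apply]
    show ∑ s ∈ range (N3 + 1), ((-1 : ℤ) ^ s * (N3.choose s : ℤ)) •
      T j (ρ (a (i + (N3 : ℤ) - s)) (c (k + s))) = (0 : A)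
    have hpull : ∀ s ∈ range (N3 + 1), ((-1 : ℤ) ^ s * (N3.choose s : ℤ)) •
        T j (ρ (a (i + (N3 : ℤ) - s)) (c (k + s)))
        = (AddMonoidHom.mk' (T j) (hT j))
            (((-1 : ℤ) ^ s * (N3.choose s : ℤ)) • ρ (a (i + (N3 : ℤ) - s)) (c (k + s))) := by
      intro s _
      rw [map_zsmul]
      rfl
    rw [Finset.sum_congr rfl hpull, ← map_sum, h3 i k, map_zero]
  -- raise orders to N
  have hFopN : ((PD.x (A := A)) ^ N) F = 0 := by
    have he : (PD.x (A := A)) ^ N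
        = (PD.x (A := A)) ^ (N - N1) * (PD.x (A := A)) ^ N1 := by
      rw [← pow_add]; congr 1; omega
    rw [he, Module.End.mul_apply, hFop, map_zero]
  have hGopN : ((PD.y (A := A)) ^ N) G = 0 := by
    have he : (PD.y (A := A)) ^ N
        = (PD.y (A := A)) ^ (N - N2) * (PD.y (A := A)) ^ N2 := by
      rw [← pow_add]; congr 1; omega
    rw [he, Module.End.mul_apply, hGop, map_zero]
  have hHopN : (((PD.x (A := A) + PD.y) ^ N : Module.End ℤ (ℤ → ℤ → ℤ → A))) H = 0 := by
    have hxyz : PD.x (A := A) + PD.y = PD.z := sub_add_sub_cancel _ _ _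
    rw [hxyz]
    have he : (PD.z (A := A)) ^ N
        = (PD.z (A := A)) ^ (N - N3) * (PD.z (A := A)) ^ N3 := by
      rw [← pow_add]; congr 1; omega
    rw [he, Module.End.mul_apply, hHop, map_zero]
  have hFGH : F = G + H := by
    funext i j k
    show F i j k = G i j k + H i j k
    exact hdec i j k
  have hcomm : Commute (PD.x (A := A)) (PD.y (A := A)) :=
    Commute.sub_left (Commute.sub_right PD.c12 PD.c13)
      (Commute.sub_right (Commute.refl PD.sh2) PD.c23)
  have key := PD.dong_core _ _ hcomm N F G H hFGH hFopN hGopN hHopN n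
  refine ⟨5 * N + 2, fun m p => ?_⟩
  have hev := congrFun (congrFun (congrFun key 0) m) p
  rw [Module.End.mul_apply] at hev
  rw [PD.op23_apply] at hev
  simp only [PD.op12_apply, Pi.zero_apply] at hev
  simp only [zero_add, hFdef] at hev
  exact hev

/-- Locality is symmetric for (anti)symmetric products. -/
lemma PD.isLocalPair_swap (ν : A → A → A) (ε : ℤ)
    (hsymm : ∀ u v : A, ν u v = ε • ν v u) (u v : ℤ → A)
    (h : IsLocalPair ν u v) : IsLocalPair ν v u := by
  obtain ⟨N, hN⟩ := h
  refine ⟨N, fun m p => ?_⟩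
  have step1 : ∑ s ∈ range (N + 1), ((-1 : ℤ) ^ s * (N.choose s : ℤ)) •
      ν (v (m + (N : ℤ) - s)) (u (p + s))
      = ε • ∑ s ∈ range (N + 1), ((-1 : ℤ) ^ s * (N.choose s : ℤ)) •
          ν (u (p + s)) (v (m + (N : ℤ) - s)) := by
    rw [Finset.smul_sum]
    refine Finset.sum_congr rfl fun s _ => ?_
    rw [hsymm, smul_comm]
  rw [step1]
  have step2 : ∑ s ∈ range (N + 1), ((-1 : ℤ) ^ s * (N.choose s : ℤ)) •
      ν (u (p + s)) (v (m + (N : ℤ) - s))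
      = (-1 : ℤ) ^ N • ∑ s ∈ range (N + 1), ((-1 : ℤ) ^ s * (N.choose s : ℤ)) •
          ν (u (p + (N : ℤ) - s)) (v (m + s)) := by
    rw [← Finset.sum_range_reflect (fun s => ((-1 : ℤ) ^ s * (N.choose s : ℤ)) •
      ν (u (p + s)) (v (m + (N : ℤ) - s))) (N + 1), Finset.smul_sum]
    refine Finset.sum_congr rfl fun s hs => ?_
    rw [Finset.mem_range] at hs
    have hs' : s ≤ N := by omega
    have hidx : N + 1 - 1 - s = N - s := by omega
    rw [hidx]
    have hcast : ((N - s : ℕ) : ℤ) = (N : ℤ) - s := by omega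
    have hchoose : (N.choose (N - s)) = N.choose s := Nat.choose_symm hs'
    have hsign : ((-1 : ℤ)) ^ (N - s) = (-1 : ℤ) ^ N * (-1 : ℤ) ^ s := by
      have h1 : ((-1 : ℤ)) ^ (N - s) * (-1 : ℤ) ^ s = (-1 : ℤ) ^ N := by
        rw [← pow_add]; congr 1; omega
      have h2 : ((-1 : ℤ)) ^ s * (-1 : ℤ) ^ s = 1 := by
        rw [← pow_add, ← two_mul, pow_mul]; norm_num
      calc ((-1 : ℤ)) ^ (N - s) = ((-1 : ℤ)) ^ (N - s) * (((-1 : ℤ)) ^ s * ((-1 : ℤ)) ^ s) := by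
            rw [h2, mul_one]
        _ = (((-1 : ℤ)) ^ (N - s) * ((-1 : ℤ)) ^ s) * ((-1 : ℤ)) ^ s := by ring
        _ = (-1 : ℤ) ^ N * (-1 : ℤ) ^ s := by rw [h1]
    rw [hchoose, hcast, hsign, smul_smul]
    have harg1 : p + ((N : ℤ) - s) = p + (N : ℤ) - s := by ring
    have harg2 : m + (N : ℤ) - ((N : ℤ) - s) = m + s := by ring
    rw [harg1, harg2]
    congr 1
    ring
  rw [step2, hN p m, smul_zero, smul_zero]

end Main

/-- Poisson algebras satisfy the Dong property. -/
theorem poisson_dong_property (k : Type*) [Field k] [CharZero k]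
    (A : Type*) [AddCommGroup A] [Module k A]
    (m β : A → A → A) (hbilm : IsBilinear k m) (hbilβ : IsBilinear k β)
    (hcomm : ∀ x y : A, m x y = m y x)
    (hassoc : ∀ x y z : A, m (m x y) z = m x (m y z))
    (halt : ∀ x : A, β x x = 0)
    (hjac : ∀ x y z : A, β x (β y z) + β y (β z x) + β z (β x y) = 0)
    (hleib : ∀ x y z : A, β (m x y) z = m x (β y z) + m (β x z) y)
    (a b c : ℤ → A)
    (hloc : ∀ μ ∈ ({m, β} : Set (A → A → A)), PairwiseMutuallyLocal μ a b c)
    (n : ℕ) :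
    ∀ μ ∈ ({m, β} : Set (A → A → A)), ∀ ν ∈ ({m, β} : Set (A → A → A)),
      IsLocalPair ν (NthProduct μ n a b) c ∧ IsLocalPair ν c (NthProduct μ n a b) := by
  obtain ⟨mab, mba, mac, mca, mbc, mcb⟩ := hloc m (Set.mem_insert m _)
  obtain ⟨βab, βba, βac, βca, βbc, βcb⟩ := hloc β (Set.mem_insert_of_mem m rfl)
  -- basic algebra
  have hm2neg : ∀ x w : A, m x (-w) = - m x w := fun x w =>
    (AddMonoidHom.mk' (m x) (fun u v => hbilm.2.1 x u v)).map_neg w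
  have hβ2neg : ∀ x w : A, β x (-w) = - β x w := fun x w =>
    (AddMonoidHom.mk' (β x) (fun u v => hbilβ.2.1 x u v)).map_neg w
  have hanti : ∀ x y : A, β x y = - β y x := by
    intro x y
    have h0 := halt (x + y)
    rw [hbilβ.1, hbilβ.2.1, hbilβ.2.1, halt x, halt y] at h0
    have hxy0 : β x y + β y x = 0 := by
      have h0' := h0
      rw [zero_add] at h0'
      rw [add_zero] at h0'
      exact h0'
    exact eq_neg_of_add_eq_zero_left hxy0
  -- bridge : concrete Dong lemma to IsLocalPair form
  have bridge : ∀ (μ ν ψ ρ : A → A → A) (S T : ℤ → A → A),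
      (∀ x y z : A, ν (x + y) z = ν x z + ν y z) →
      (∀ i u v, S i (u + v) = S i u + S i v) →
      (∀ j u v, T j (u + v) = T j u + T j v) →
      IsLocalPair μ a b → IsLocalPair ψ b c → IsLocalPair ρ a c →
      (∀ i j k : ℤ, ν (μ (a i) (b j)) (c k) = S i (ψ (b j) (c k)) + T j (ρ (a i) (c k))) →
      IsLocalPair ν (NthProduct μ n a b) c := by
    intro μ' ν' ψ ρ S T hν1 hS hT hab hbc hac hdec
    obtain ⟨M, hM⟩ := PD.dong_main μ' ψ ρ (fun q v => ν' v (c q)) S T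
        (fun q u v => hν1 u v (c q)) hS hT a b c hab hbc hac hdec n
    refine ⟨M, fun mm pp => ?_⟩
    refine (Finset.sum_congr rfl fun s _ => ?_).trans (hM mm pp)
    congr 1
    show (AddMonoidHom.mk' (fun v => ν' v (c (pp + (s : ℤ)))) (fun u v => hν1 u v _))
        (NthProduct μ' n a b (mm + (M : ℤ) - (s : ℤ))) = _
    simp only [NthProduct, map_sum]
    refine Finset.sum_congr rfl fun j _ => ?_
    rw [map_zsmul]
    rfl
  have hsymm_m : ∀ u v : A, m u v = (1 : ℤ) • m v u := fun u v => by
    rw [one_zsmul]; exact hcomm u v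
  have hsymm_β : ∀ u v : A, β u v = (-1 : ℤ) • β v u := fun u v => by
    rw [neg_one_zsmul]; exact hanti u v
  intro μ hμ ν hν
  simp only [Set.mem_insert_iff, Set.mem_singleton_iff] at hμ hν
  rcases hμ with hμ | hμ <;> rcases hν with hν | hν <;> rw [hμ, hν]
  · -- μ = m, ν = m
    have g1 : IsLocalPair m (NthProduct m n a b) c := by
      refine bridge m m m m (fun i u => m (a i) u) (fun _ _ => (0 : A))
        hbilm.1 (fun i u v => hbilm.2.1 (a i) u v) (fun _ _ _ => (add_zero (0 : A)).symm)
        mab mbc mac ?_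
      intro i j k
      show m (m (a i) (b j)) (c k) = m (a i) (m (b j) (c k)) + 0
      rw [add_zero]
      exact hassoc _ _ _
    exact ⟨g1, PD.isLocalPair_swap m 1 hsymm_m _ c g1⟩
  · -- μ = m, ν = β
    have g1 : IsLocalPair β (NthProduct m n a b) c := by
      refine bridge m β β β (fun i u => m (a i) u) (fun j u => m u (b j))
        hbilβ.1 (fun i u v => hbilm.2.1 (a i) u v) (fun j u v => hbilm.1 u v (b j))
        mab βbc βac ?_
      intro i j k
      show β (m (a i) (b j)) (c k) = m (a i) (β (b j) (c k)) + m (β (a i) (c k)) (b j)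
      exact hleib _ _ _
    exact ⟨g1, PD.isLocalPair_swap β (-1) hsymm_β _ c g1⟩
  · -- μ = β, ν = m
    have g1 : IsLocalPair m (NthProduct β n a b) c := by
      refine bridge β m β m (fun i u => m (a i) u) (fun j u => β u (b j))
        hbilm.1 (fun i u v => hbilm.2.1 (a i) u v) (fun j u v => hbilβ.1 u v (b j))
        βab βbc mac ?_
      intro i j k
      show m (β (a i) (b j)) (c k) = m (a i) (β (b j) (c k)) + β (m (a i) (c k)) (b j)
      have h := hleib (a i) (c k) (b j)
      rw [h, hanti (c k) (b j), hm2neg]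
      abel
    exact ⟨g1, PD.isLocalPair_swap m 1 hsymm_m _ c g1⟩
  · -- μ = β, ν = β
    have g1 : IsLocalPair β (NthProduct β n a b) c := by
      refine bridge β β β β (fun i u => β (a i) u) (fun j u => -β (b j) u)
        hbilβ.1 (fun i u v => hbilβ.2.1 (a i) u v)
        (fun j u v => by
          show -β (b j) (u + v) = -β (b j) u + -β (b j) v
          rw [hbilβ.2.1 (b j) u v, neg_add])
        βab βbc βac ?_
      intro i j k
      show β (β (a i) (b j)) (c k) = β (a i) (β (b j) (c k)) + -β (b j) (β (a i) (c k))
      have hj := hjac (a i) (b j) (c k)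
      rw [hanti (c k) (a i), hβ2neg] at hj
      rw [hanti (β (a i) (b j)) (c k)]
      exact (eq_neg_of_add_eq_zero_left hj).symm
    exact ⟨g1, PD.isLocalPair_swap β (-1) hsymm_β _ c g1⟩
end

section
/- Associative dialgebras satisfy the Dong property (the di-replication of the associative case): if A is an associative dialgebra over a field k of characteristic 0 with operations λ(x,y) = x ⊣ y and ρ(x,y) = x ⊢ y, and a, b, c are pairwise mutually F-local formal distributions over A for the family F = {λ, ρ}, then for every n ∈ ℕ and every μ, ν ∈ F both ordered pairs (a ∘_{μ,n} b, c) and (c, a ∘_{μ,n} b) are ν-local. -/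
namespace DiasDongAux

variable {A : Type*} [AddCommGroup A]

/-- Shift in the first variable. -/
def T1 (A : Type*) [AddCommGroup A] : Module.End ℤ (ℤ → ℤ → ℤ → A) where
  toFun f := fun i m p => f (i+1) m p
  map_add' _ _ := rfl
  map_smul' _ _ := rfl

/-- Shift in the second variable. -/
def T2 (A : Type*) [AddCommGroup A] : Module.End ℤ (ℤ → ℤ → ℤ → A) where
  toFun f := fun i m p => f i (m+1) p
  map_add' _ _ := rfl
  map_smul' _ _ := rfl

/-- Shift in the third variable. -/
def T3 (A : Type*) [AddCommGroup A] : Module.End ℤ (ℤ → ℤ → ℤ → A) where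
  toFun f := fun i m p => f i m (p+1)
  map_add' _ _ := rfl
  map_smul' _ _ := rfl

lemma c12 : Commute (T1 A) (T2 A) := LinearMap.ext fun _ => rfl
lemma c13 : Commute (T1 A) (T3 A) := LinearMap.ext fun _ => rfl
lemma c23 : Commute (T2 A) (T3 A) := LinearMap.ext fun _ => rfl

lemma T1_pow_apply : ∀ (k : ℕ) (f : ℤ → ℤ → ℤ → A) (i m p : ℤ),
    (T1 A ^ k) f i m p = f (i + k) m p := by
  intro k
  induction k with
  | zero => intro f i m p; simp
  | succ k ih =>
    intro f i m p
    rw [pow_succ]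
    show (T1 A ^ k) (T1 A f) i m p = _
    rw [ih]
    show f (i + k + 1) m p = _
    congr 1; push_cast; ring

lemma T2_pow_apply : ∀ (k : ℕ) (f : ℤ → ℤ → ℤ → A) (i m p : ℤ),
    (T2 A ^ k) f i m p = f i (m + k) p := by
  intro k
  induction k with
  | zero => intro f i m p; simp
  | succ k ih =>
    intro f i m p
    rw [pow_succ]
    show (T2 A ^ k) (T2 A f) i m p = _
    rw [ih]
    show f i (m + k + 1) p = _
    congr 1; push_cast; ring

lemma T3_pow_apply : ∀ (k : ℕ) (f : ℤ → ℤ → ℤ → A) (i m p : ℤ),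
    (T3 A ^ k) f i m p = f i m (p + k) := by
  intro k
  induction k with
  | zero => intro f i m p; simp
  | succ k ih =>
    intro f i m p
    rw [pow_succ]
    show (T3 A ^ k) (T3 A f) i m p = _
    rw [ih]
    show f i m (p + k + 1) = _
    congr 1; push_cast; ring

lemma sub_pow_expand {R : Type*} [Ring R] {x y : R} (h : Commute x y) (N : ℕ) :
    (x - y) ^ N = ∑ s ∈ Finset.range (N+1),
      ((-1:ℤ)^s * (N.choose s : ℤ)) • (x^(N-s) * y^s) := by
  have h' : Commute (-y) x := h.symm.neg_left
  rw [sub_eq_add_neg, add_comm, h'.add_pow]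
  refine Finset.sum_congr rfl fun s hs => ?_
  calc (-y)^s * x^(N-s) * ((N.choose s : ℕ) : R)
      = ((-1:R)^s * y^s) * x^(N-s) * ((N.choose s : ℕ) : R) := by rw [neg_pow]
    _ = (-1:R)^s * (y^s * x^(N-s)) * ((N.choose s : ℕ) : R) := by
        rw [mul_assoc ((-1:R)^s)]
    _ = (-1:R)^s * (x^(N-s) * y^s) * ((N.choose s : ℕ) : R) := by
        rw [(h.symm.pow_pow s (N-s)).eq]
    _ = ((-1:R)^s * ((N.choose s : ℕ) : R)) * (x^(N-s) * y^s) := by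
        rw [mul_assoc, ← (Nat.cast_commute (N.choose s) (x^(N-s) * y^s)).eq, ← mul_assoc]
    _ = ((-1:ℤ)^s * (N.choose s : ℤ)) • (x^(N-s) * y^s) := by
        rw [zsmul_eq_mul]; push_cast; ring_nf

lemma sub_pow_apply (X Y : Module.End ℤ (ℤ → ℤ → ℤ → A)) (h : Commute X Y) (N : ℕ)
    (F : ℤ → ℤ → ℤ → A) (i m p : ℤ) :
    ((X - Y)^N) F i m p
      = ∑ s ∈ Finset.range (N+1),
          ((-1:ℤ)^s * (N.choose s : ℤ)) • ((X^(N-s)) ((Y^s) F) i m p) := by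
  rw [sub_pow_expand h]
  simp only [LinearMap.sum_apply, Finset.sum_apply, LinearMap.smul_apply, Pi.smul_apply,
    Module.End.mul_apply]

lemma D12_pow_apply (N : ℕ) (F : ℤ → ℤ → ℤ → A) (i m p : ℤ) :
    ((T1 A - T2 A)^N) F i m p
      = ∑ s ∈ Finset.range (N+1),
          ((-1:ℤ)^s * (N.choose s : ℤ)) • F (i + (N:ℤ) - (s:ℤ)) (m + (s:ℤ)) p := by
  rw [sub_pow_apply _ _ c12]
  refine Finset.sum_congr rfl fun s hs => ?_
  rw [T1_pow_apply, T2_pow_apply]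
  have hsN : s ≤ N := by have := Finset.mem_range.mp hs; omega
  have : i + ((N - s : ℕ) : ℤ) = i + (N:ℤ) - (s:ℤ) := by omega
  rw [this]

lemma D13_pow_apply (N : ℕ) (F : ℤ → ℤ → ℤ → A) (i m p : ℤ) :
    ((T1 A - T3 A)^N) F i m p
      = ∑ s ∈ Finset.range (N+1),
          ((-1:ℤ)^s * (N.choose s : ℤ)) • F (i + (N:ℤ) - (s:ℤ)) m (p + (s:ℤ)) := by
  rw [sub_pow_apply _ _ c13]
  refine Finset.sum_congr rfl fun s hs => ?_
  rw [T1_pow_apply, T3_pow_apply]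
  have hsN : s ≤ N := by have := Finset.mem_range.mp hs; omega
  have : i + ((N - s : ℕ) : ℤ) = i + (N:ℤ) - (s:ℤ) := by omega
  rw [this]

lemma D23_pow_apply (N : ℕ) (F : ℤ → ℤ → ℤ → A) (i m p : ℤ) :
    ((T2 A - T3 A)^N) F i m p
      = ∑ s ∈ Finset.range (N+1),
          ((-1:ℤ)^s * (N.choose s : ℤ)) • F i (m + (N:ℤ) - (s:ℤ)) (p + (s:ℤ)) := by
  rw [sub_pow_apply _ _ c23]
  refine Finset.sum_congr rfl fun s hs => ?_
  rw [T2_pow_apply, T3_pow_apply]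
  have hsN : s ≤ N := by have := Finset.mem_range.mp hs; omega
  have : m + ((N - s : ℕ) : ℤ) = m + (N:ℤ) - (s:ℤ) := by omega
  rw [this]

lemma D32_pow_apply (N : ℕ) (F : ℤ → ℤ → ℤ → A) (i m p : ℤ) :
    ((T3 A - T2 A)^N) F i m p
      = ∑ s ∈ Finset.range (N+1),
          ((-1:ℤ)^s * (N.choose s : ℤ)) • F i (m + (s:ℤ)) (p + (N:ℤ) - (s:ℤ)) := by
  rw [sub_pow_apply _ _ c23.symm]
  refine Finset.sum_congr rfl fun s hs => ?_
  rw [T3_pow_apply, T2_pow_apply]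
  have hsN : s ≤ N := by have := Finset.mem_range.mp hs; omega
  have : p + ((N - s : ℕ) : ℤ) = p + (N:ℤ) - (s:ℤ) := by omega
  rw [this]

lemma pow_apply_comm (x z : Module.End ℤ (ℤ → ℤ → ℤ → A)) (h : Commute x z) (N n : ℕ)
    (F : ℤ → ℤ → ℤ → A) (hz : (z^N) F = 0) : (z^N) ((x^n) F) = 0 := by
  rw [← Module.End.mul_apply, (h.symm.pow_pow N n).eq, Module.End.mul_apply, hz, map_zero]

lemma dong_core (x y : Module.End ℤ (ℤ → ℤ → ℤ → A)) (h : Commute x y)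
    (F : ℤ → ℤ → ℤ → A) (n N1 N2 : ℕ) (hx : (x^N1) F = 0) (hy : (y^N2) F = 0) :
    ((x - y)^(N1+N2)) ((x^n) F) = 0 := by
  rw [sub_pow_expand h, LinearMap.sum_apply]
  refine Finset.sum_eq_zero fun s hs => ?_
  rw [LinearMap.smul_apply, Module.End.mul_apply]
  by_cases hsN : N2 ≤ s
  · have e2 : (y^s) F = 0 := by
      have hposs : y^s = y^(s-N2) * y^N2 := by rw [← pow_add]; congr 1; omega
      rw [hposs, Module.End.mul_apply, hy, map_zero]
    have h1 : (y^s) ((x^n) F) = 0 := by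
      have e1 : (y^s) ((x^n) F) = (x^n) ((y^s) F) := by
        rw [← Module.End.mul_apply, ← Module.End.mul_apply, (h.symm.pow_pow s n).eq]
      rw [e1, e2, map_zero]
    rw [h1, map_zero, smul_zero]
  · have e0 : x^(N1+N2-s) * y^s * x^n = y^s * x^(N1+N2-s+n) := by
      rw [(h.pow_pow (N1+N2-s) s).eq, mul_assoc, ← pow_add]
    have e2 : (x^(N1+N2-s+n)) F = 0 := by
      have hposs : x^(N1+N2-s+n) = x^(N1+N2-s+n-N1) * x^N1 := by
        rw [← pow_add]; congr 1; omega
      rw [hposs, Module.End.mul_apply, hx, map_zero]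
    have : (x^(N1+N2-s)) ((y^s) ((x^n) F)) = 0 := by
      rw [← Module.End.mul_apply, ← Module.End.mul_apply, e0,
        Module.End.mul_apply, e2, map_zero]
    rw [this, smul_zero]

lemma push_sum (φ : A → A) (hφ : ∀ x y, φ (x+y) = φ x + φ y)
    (S : Finset ℕ) (cst : ℕ → ℤ) (v : ℕ → A) :
    ∑ s ∈ S, cst s • φ (v s) = φ (∑ s ∈ S, cst s • v s) := by
  let L : A →+ A := AddMonoidHom.mk' φ hφ
  show ∑ s ∈ S, cst s • L (v s) = L _
  rw [map_sum]
  exact Finset.sum_congr rfl fun s _ => (map_zsmul L _ _).symm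

lemma map_zero' (φ : A → A) (hφ : ∀ x y, φ (x+y) = φ x + φ y) : φ 0 = 0 := by
  have h := hφ 0 0
  rw [add_zero] at h
  exact (left_eq_add.mp h)

end DiasDongAux

namespace DiasDongAux

variable {A : Type*} [AddCommGroup A]

lemma reflect_local (ν' : A → A → A) (c a : ℤ → A) (N : ℕ)
    (h : ∀ m p : ℤ, ∑ s ∈ Finset.range (N + 1),
      ((-1 : ℤ) ^ s * (N.choose s : ℤ)) • ν' (c (m + (N : ℤ) - (s : ℤ))) (a (p + (s : ℤ))) = 0)
    (i p : ℤ) :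
    ∑ s ∈ Finset.range (N + 1),
      ((-1 : ℤ) ^ s * (N.choose s : ℤ)) • ν' (c (p + (s:ℤ))) (a (i + (N:ℤ) - (s:ℤ))) = 0 := by
  have hrefl := Finset.sum_range_reflect
    (fun s => ((-1:ℤ)^s * (N.choose s:ℤ)) • ν' (c (p + (s:ℤ))) (a (i + (N:ℤ) - (s:ℤ)))) (N+1)
  rw [← hrefl]
  have hcongr : ∀ j ∈ Finset.range (N+1),
      (fun s => ((-1:ℤ)^s * (N.choose s:ℤ)) • ν' (c (p + (s:ℤ))) (a (i + (N:ℤ) - (s:ℤ))))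
        (N + 1 - 1 - j)
      = (-1:ℤ)^N • (((-1:ℤ)^j * (N.choose j:ℤ)) •
          ν' (c (p + (N:ℤ) - (j:ℤ))) (a (i + (j:ℤ)))) := by
    intro j hj
    have hjN : j ≤ N := by have := Finset.mem_range.mp hj; omega
    dsimp only
    have h1 : N + 1 - 1 - j = N - j := by omega
    rw [h1]
    have h2 : p + ((N - j : ℕ) : ℤ) = p + (N:ℤ) - (j:ℤ) := by omega
    have h3 : i + (N:ℤ) - ((N - j : ℕ):ℤ) = i + (j:ℤ) := by omega
    rw [h2, h3, Nat.choose_symm hjN, smul_smul]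
    congr 1
    have hsgn : (-1:ℤ)^(N-j) = (-1)^N * (-1)^j := by
      have hexp : N + j = (N - j) + 2*j := by omega
      calc (-1:ℤ)^(N-j) = (-1)^(N-j) * ((-1)^2)^j := by norm_num
        _ = (-1)^(N - j + 2*j) := by rw [← pow_mul, ← pow_add]
        _ = (-1)^(N + j) := by rw [← hexp]
        _ = (-1)^N * (-1)^j := by rw [pow_add]
    rw [hsgn]; ring
  rw [Finset.sum_congr rfl hcongr, ← Finset.smul_sum, h p i, smul_zero]

lemma dong_right (μ ν μ' ν' : A → A → A)
    (hν1 : ∀ x y z : A, ν (x+y) z = ν x z + ν y z)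
    (hμ'2 : ∀ x y z : A, μ' x (y+z) = μ' x y + μ' x z)
    (hassoc : ∀ x y z : A, ν (μ x y) z = μ' x (ν' y z))
    (a b c : ℤ → A) (n : ℕ) (hbc : IsLocalPair ν' b c) :
    IsLocalPair ν (NthProduct μ n a b) c := by
  obtain ⟨N, hN⟩ := hbc
  set F : ℤ → ℤ → ℤ → A := fun i m p => ν (μ (a i) (b m)) (c p) with hF
  have hFz : ((T2 A - T3 A)^N) F = 0 := by
    funext i m p
    rw [D23_pow_apply]
    show _ = (0:A)
    calc ∑ s ∈ Finset.range (N+1),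
          ((-1:ℤ)^s * (N.choose s:ℤ)) • F i (m + (N:ℤ) - (s:ℤ)) (p + (s:ℤ))
        = ∑ s ∈ Finset.range (N+1), ((-1:ℤ)^s * (N.choose s:ℤ)) •
            μ' (a i) (ν' (b (m + (N:ℤ) - (s:ℤ))) (c (p + (s:ℤ)))) := by
          refine Finset.sum_congr rfl fun s _ => ?_
          rw [hF]; dsimp only; rw [hassoc]
      _ = μ' (a i) (∑ s ∈ Finset.range (N+1), ((-1:ℤ)^s * (N.choose s:ℤ)) •
            ν' (b (m + (N:ℤ) - (s:ℤ))) (c (p + (s:ℤ)))) :=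
          push_sum _ (hμ'2 (a i)) _ _ _
      _ = μ' (a i) 0 := by rw [hN m p]
      _ = 0 := map_zero' _ (hμ'2 (a i))
  have key : ∀ m' p' : ℤ, ν (NthProduct μ n a b m') (c p')
      = ((T1 A - T2 A)^n) F 0 m' p' := by
    intro m' p'
    rw [D12_pow_apply]
    calc ν (NthProduct μ n a b m') (c p')
        = ∑ j ∈ Finset.range (n+1), ((-1:ℤ)^j * (n.choose j:ℤ)) •
            ν (μ (a ((n:ℤ) - (j:ℤ))) (b (m' + (j:ℤ)))) (c p') :=
          (push_sum (fun x => ν x (c p')) (fun u v => hν1 u v (c p')) _ _ _).symm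
      _ = ∑ j ∈ Finset.range (n+1), ((-1:ℤ)^j * (n.choose j:ℤ)) •
            F ((0:ℤ) + (n:ℤ) - (j:ℤ)) (m' + (j:ℤ)) p' := by
          refine Finset.sum_congr rfl fun j _ => ?_
          rw [hF]; dsimp only
          have : (0:ℤ) + (n:ℤ) - (j:ℤ) = (n:ℤ) - (j:ℤ) := by ring
          rw [this]
  refine ⟨N, fun m p => ?_⟩
  calc ∑ s ∈ Finset.range (N+1), ((-1:ℤ)^s * (N.choose s:ℤ)) •
        ν (NthProduct μ n a b (m + (N:ℤ) - (s:ℤ))) (c (p + (s:ℤ)))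
      = ∑ s ∈ Finset.range (N+1), ((-1:ℤ)^s * (N.choose s:ℤ)) •
          ((T1 A - T2 A)^n) F 0 (m + (N:ℤ) - (s:ℤ)) (p + (s:ℤ)) := by
        refine Finset.sum_congr rfl fun s _ => ?_
        rw [key]
    _ = ((T2 A - T3 A)^N) (((T1 A - T2 A)^n) F) 0 m p := (D23_pow_apply N _ 0 m p).symm
    _ = 0 := by
        have hcomm : Commute (T1 A - T2 A) (T2 A - T3 A) :=
          ((c12 (A := A)).sub_left (Commute.refl (T2 A))).sub_right
            ((c13 (A := A)).sub_left (c23 (A := A)))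
        rw [pow_apply_comm _ _ hcomm N n F hFz]
        rfl

lemma dong_left (μ ν μ' ν' : A → A → A)
    (hν2 : ∀ x y z : A, ν x (y+z) = ν x y + ν x z)
    (hμ'1 : ∀ x y z : A, μ' (x+y) z = μ' x z + μ' y z)
    (hassoc : ∀ x y z : A, ν z (μ x y) = μ' (ν' z x) y)
    (a b c : ℤ → A) (n : ℕ) (hca : IsLocalPair ν' c a) (hab : IsLocalPair μ a b) :
    IsLocalPair ν c (NthProduct μ n a b) := by
  obtain ⟨N1, h1⟩ := hca
  obtain ⟨N2, h2⟩ := hab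
  set F : ℤ → ℤ → ℤ → A := fun i m p => ν (c p) (μ (a i) (b m)) with hF
  have hx : ((T1 A - T2 A)^N2) F = 0 := by
    funext i m p
    rw [D12_pow_apply]
    show _ = (0:A)
    calc ∑ s ∈ Finset.range (N2+1),
          ((-1:ℤ)^s * (N2.choose s:ℤ)) • F (i + (N2:ℤ) - (s:ℤ)) (m + (s:ℤ)) p
        = ∑ s ∈ Finset.range (N2+1), ((-1:ℤ)^s * (N2.choose s:ℤ)) •
            ν (c p) (μ (a (i + (N2:ℤ) - (s:ℤ))) (b (m + (s:ℤ)))) := by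
          refine Finset.sum_congr rfl fun s _ => ?_
          rw [hF]
      _ = ν (c p) (∑ s ∈ Finset.range (N2+1), ((-1:ℤ)^s * (N2.choose s:ℤ)) •
            μ (a (i + (N2:ℤ) - (s:ℤ))) (b (m + (s:ℤ)))) :=
          push_sum _ (hν2 (c p)) _ _ _
      _ = ν (c p) 0 := by rw [h2 i m]
      _ = 0 := map_zero' _ (hν2 (c p))
  have hy : ((T1 A - T3 A)^N1) F = 0 := by
    funext i m p
    rw [D13_pow_apply]
    show _ = (0:A)
    calc ∑ s ∈ Finset.range (N1+1),
          ((-1:ℤ)^s * (N1.choose s:ℤ)) • F (i + (N1:ℤ) - (s:ℤ)) m (p + (s:ℤ))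
        = ∑ s ∈ Finset.range (N1+1), ((-1:ℤ)^s * (N1.choose s:ℤ)) •
            μ' (ν' (c (p + (s:ℤ))) (a (i + (N1:ℤ) - (s:ℤ)))) (b m) := by
          refine Finset.sum_congr rfl fun s _ => ?_
          rw [hF]; dsimp only; rw [hassoc]
      _ = μ' (∑ s ∈ Finset.range (N1+1), ((-1:ℤ)^s * (N1.choose s:ℤ)) •
            ν' (c (p + (s:ℤ))) (a (i + (N1:ℤ) - (s:ℤ)))) (b m) :=
          push_sum (fun x => μ' x (b m)) (fun u v => hμ'1 u v (b m)) _ _ _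
      _ = μ' 0 (b m) := by rw [reflect_local ν' c a N1 h1 i p]
      _ = 0 := map_zero' (fun x => μ' x (b m)) (fun u v => hμ'1 u v (b m))
  have key : ∀ m' p' : ℤ, ν (c p') (NthProduct μ n a b m')
      = ((T1 A - T2 A)^n) F 0 m' p' := by
    intro m' p'
    rw [D12_pow_apply]
    calc ν (c p') (NthProduct μ n a b m')
        = ∑ j ∈ Finset.range (n+1), ((-1:ℤ)^j * (n.choose j:ℤ)) •
            ν (c p') (μ (a ((n:ℤ) - (j:ℤ))) (b (m' + (j:ℤ)))) :=
          (push_sum _ (hν2 (c p')) _ _ _).symm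
      _ = ∑ j ∈ Finset.range (n+1), ((-1:ℤ)^j * (n.choose j:ℤ)) •
            F ((0:ℤ) + (n:ℤ) - (j:ℤ)) (m' + (j:ℤ)) p' := by
          refine Finset.sum_congr rfl fun j _ => ?_
          rw [hF]; dsimp only
          have : (0:ℤ) + (n:ℤ) - (j:ℤ) = (n:ℤ) - (j:ℤ) := by ring
          rw [this]
  refine ⟨N2 + N1, fun m p => ?_⟩
  have hcomm : Commute (T1 A - T2 A) (T1 A - T3 A) :=
    ((Commute.refl (T1 A)).sub_left ((c12 (A := A)).symm)).sub_right
      ((c13 (A := A)).sub_left (c23 (A := A)))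
  have hsub : T1 A - T2 A - (T1 A - T3 A) = T3 A - T2 A := by abel
  have hzero : ((T3 A - T2 A)^(N2 + N1)) (((T1 A - T2 A)^n) F) = 0 := by
    rw [← hsub]
    exact dong_core _ _ hcomm F n N2 N1 hx hy
  calc ∑ s ∈ Finset.range (N2+N1+1), ((-1:ℤ)^s * ((N2+N1).choose s:ℤ)) •
        ν (c (m + ((N2+N1:ℕ):ℤ) - (s:ℤ))) (NthProduct μ n a b (p + (s:ℤ)))
      = ∑ s ∈ Finset.range (N2+N1+1), ((-1:ℤ)^s * ((N2+N1).choose s:ℤ)) •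
          ((T1 A - T2 A)^n) F 0 (p + (s:ℤ)) (m + ((N2+N1:ℕ):ℤ) - (s:ℤ)) := by
        refine Finset.sum_congr rfl fun s _ => ?_
        rw [key]
    _ = ((T3 A - T2 A)^(N2+N1)) (((T1 A - T2 A)^n) F) 0 p m :=
        (D32_pow_apply (N2+N1) _ 0 p m).symm
    _ = 0 := by rw [hzero]; rfl

end DiasDongAux

/-- Associative dialgebras satisfy the Dong property.
Here `l x y = x ⊣ y` and `r x y = x ⊢ y`. -/
theorem dias_dong_property (k : Type*) [Field k] [CharZero k]
    (A : Type*) [AddCommGroup A] [Module k A]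
    (l r : A → A → A) (hbill : IsBilinear k l) (hbilr : IsBilinear k r)
    (hd1 : ∀ x y z : A, l x (l y z) = l (l x y) z)
    (hd2 : ∀ x y z : A, l x (l y z) = l x (r y z))
    (hd3 : ∀ x y z : A, l (r x y) z = r x (l y z))
    (hd4 : ∀ x y z : A, r (l x y) z = r (r x y) z)
    (hd5 : ∀ x y z : A, r x (r y z) = r (r x y) z)
    (a b c : ℤ → A)
    (hloc : ∀ μ ∈ ({l, r} : Set (A → A → A)), PairwiseMutuallyLocal μ a b c)
    (n : ℕ) :
    ∀ μ ∈ ({l, r} : Set (A → A → A)), ∀ ν ∈ ({l, r} : Set (A → A → A)),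
      IsLocalPair ν (NthProduct μ n a b) c ∧ IsLocalPair ν c (NthProduct μ n a b) := by
  obtain ⟨hl1, hl2, -, -⟩ := hbill
  obtain ⟨hr1, hr2, -, -⟩ := hbilr
  obtain ⟨lab, lba, lac, lca, lbc, lcb⟩ := hloc l (Set.mem_insert _ _)
  obtain ⟨rab, rba, rac, rca, rbc, rcb⟩ :=
    hloc r (Set.mem_insert_of_mem _ (Set.mem_singleton _))
  intro μ hμ ν hν
  simp only [Set.mem_insert_iff, Set.mem_singleton_iff] at hμ hν
  rcases hμ with hμ | hμ <;> rcases hν with hν | hν <;> rw [hμ, hν]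
  · exact ⟨DiasDongAux.dong_right l l l l hl1 hl2 (fun x y z => (hd1 x y z).symm) a b c n lbc,
      DiasDongAux.dong_left l l l l hl2 hl1 (fun x y z => hd1 z x y) a b c n lca lab⟩
  · exact ⟨DiasDongAux.dong_right l r r r hr1 hr2
        (fun x y z => (hd4 x y z).trans (hd5 x y z).symm) a b c n rbc,
      DiasDongAux.dong_left l r l r hr2 hl1 (fun x y z => (hd3 z x y).symm) a b c n rca lab⟩
  · exact ⟨DiasDongAux.dong_right r l r l hl1 hr2 hd3 a b c n lbc,
      DiasDongAux.dong_left r l l l hl2 hl1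
        (fun x y z => (hd2 z x y).symm.trans (hd1 z x y)) a b c n lca rab⟩
  · exact ⟨DiasDongAux.dong_right r r r r hr1 hr2 (fun x y z => (hd5 x y z).symm) a b c n rbc,
      DiasDongAux.dong_left r r r r hr2 hr1 (fun x y z => hd5 z x y) a b c n rca rab⟩
end

section
/- Di-Novikov algebras satisfy the Dong property: if A is a di-Novikov algebra over a field k of characteristic 0 with operations λ(x,y) = x ⊣ y and ρ(x,y) = x ⊢ y, and a, b, c are pairwise mutually F-local formal distributions over A for the family F = {λ, ρ}, then for every n ∈ ℕ and every μ, ν ∈ F both ordered pairs (a ∘_{μ,n} b, c) and (c, a ∘_{μ,n} b) are ν-local. -/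
open Finset

section Annihilation

variable {R M : Type*} [Semiring R] [AddCommMonoid M] [Module R M] {x y : R} {m : M}
  {p q r : ℕ}

theorem pow_smul_eq_zero_of_le (h : x ^ p • m = 0) (hpq : p ≤ q) : x ^ q • m = 0 :=
  (Ideal.torsionOf R M m).pow_mem_of_pow_mem h hpq

theorem Commute.smul_smul_comm (h : Commute x y) (m : M) : x • y • m = y • x • m := by
  rw [← mul_smul, h.eq, mul_smul]

theorem Commute.add_pow_smul_eq_zero (h : Commute x y) (hx : x ^ p • m = 0)
    (hy : y ^ q • m = 0) : (x + y) ^ (p + q) • m = 0 :=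
  (Ideal.torsionOf R M m).add_pow_mem_of_pow_mem_of_le_of_commute hx hy (by omega) h

theorem Commute.add_pow_smul_add_eq_zero (h : Commute x y) {m₁ m₂ : M}
    (hy : y ^ p • (m₁ + m₂) = 0) (hx : x ^ q • m₁ = 0) (hxy : (x + y) ^ r • m₂ = 0) :
    (x + y) ^ (q + p + r) • (m₁ + m₂) = 0 := by
  have hx' : x ^ q • (x + y) ^ r • (m₁ + m₂) = 0 := by
    rw [smul_add, hxy, add_zero,
      (((Commute.refl x).add_right h).pow_pow q r).smul_smul_comm, hx, smul_zero]
  have hy' : y ^ p • (x + y) ^ r • (m₁ + m₂) = 0 := by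
    rw [((h.symm.add_right (Commute.refl y)).pow_pow p r).smul_smul_comm, hy, smul_zero]
  rw [pow_add, mul_smul]
  exact h.add_pow_smul_eq_zero hx' hy'

end Annihilation

section Ring

variable {R M : Type*} [Ring R] [AddCommGroup M] [Module R M] {x y : R} {m : M} {p q : ℕ}

theorem neg_pow_smul_eq_zero (h : x ^ p • m = 0) : (-x) ^ p • m = 0 := by
  rw [neg_pow, mul_smul, h, smul_zero]

theorem Commute.sub_pow_smul_eq_zero (h : Commute x y) (hx : x ^ p • m = 0)
    (hy : y ^ q • m = 0) : (x - y) ^ (p + q) • m = 0 := by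
  rw [sub_eq_add_neg]
  exact h.neg_right.add_pow_smul_eq_zero hx (neg_pow_smul_eq_zero hy)

end Ring

section Shift

variable {G A : Type*} [AddCommGroup G] [AddCommGroup A]

def shift (v : G) : Module.End ℤ (G → A) := LinearMap.funLeft ℤ A (· + v)

@[simp]
theorem shift_apply (v : G) (F : G → A) (x : G) :
    (shift v : Module.End ℤ (G → A)) F x = F (x + v) := rfl

theorem shift_mul_shift (u v : G) :
    (shift u * shift v : Module.End ℤ (G → A)) = shift (u + v) := by
  ext F x
  simp [add_assoc, add_comm u v]

theorem shift_pow (v : G) (n : ℕ) : (shift v ^ n : Module.End ℤ (G → A)) = shift (n • v) := by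
  induction n with
  | zero => ext F x; simp
  | succ n ih => rw [pow_succ, ih, shift_mul_shift, succ_nsmul]

theorem commute_shift (u v : G) : Commute (shift u : Module.End ℤ (G → A)) (shift v) := by
  rw [Commute, SemiconjBy, shift_mul_shift, shift_mul_shift, add_comm]

theorem commute_shift_sub_shift (u v u' v' : G) :
    Commute (shift u - shift v : Module.End ℤ (G → A)) (shift u' - shift v') :=
  ((commute_shift u u').sub_right (commute_shift u v')).sub_left
    ((commute_shift v u').sub_right (commute_shift v v'))

theorem shift_sub_shift_pow_smul_apply (u v : G) (N : ℕ) (F : G → A) (x : G) :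
    ((shift u - shift v : Module.End ℤ (G → A)) ^ N • F) x =
      ∑ s ∈ range (N + 1),
        ((-1 : ℤ) ^ s * N.choose s) • F (x + ((N : ℤ) - s) • u + (s : ℤ) • v) := by
  rw [Module.End.smul_def, ← neg_add_eq_sub, ((commute_shift (A := A) v u).neg_left).add_pow,
    LinearMap.sum_apply, Finset.sum_apply]
  refine sum_congr rfl fun s hs => ?_
  rw [neg_pow, shift_pow, shift_pow, ← Int.cast_one, ← Int.cast_neg, ← Int.cast_pow]
  simp only [Module.End.mul_apply, Module.End.natCast_apply, Module.End.intCast_apply,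
    LinearMap.map_smul_of_tower, Pi.smul_apply, shift_apply, mul_smul, natCast_zsmul]
  rw [add_right_comm, smul_comm, ← Nat.cast_sub (mem_range_succ_iff.mp hs), natCast_zsmul]

end Shift

section FormalDistribution

variable {A : Type*} [AddCommGroup A]

/- On coefficient families of series in `w₁, w₂, w₃`, `δ[eᵢ, eⱼ]` is multiplication by `wᵢ - wⱼ`. -/
local notation "δ[" u ", " v "]" => (shift u - shift v : Module.End ℤ (ℤ × ℤ × ℤ → A))

theorem map_locality_sum_eq_zero {μ : A → A → A} {x y : ℤ → A} {N : ℕ}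
    (h : ∀ m p : ℤ, ∑ s ∈ range (N + 1),
      ((-1 : ℤ) ^ s * (N.choose s : ℤ)) • μ (x (m + (N : ℤ) - (s : ℤ))) (y (p + (s : ℤ))) = 0)
    (f : A →+ A) (m p : ℤ) :
    ∑ s ∈ range (N + 1),
      ((-1 : ℤ) ^ s * (N.choose s : ℤ)) • f (μ (x (m + ((N : ℤ) - s))) (y (p + s))) = 0 := by
  simp_rw [← map_zsmul, ← map_sum, ← add_sub_assoc, h, map_zero]

theorem map_nthProduct (f : A →+ A) (μ : A → A → A) (n : ℕ) (a b : ℤ → A) (q : ℤ) :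
    f (NthProduct μ n a b q) =
      ∑ j ∈ range (n + 1), ((-1 : ℤ) ^ j * (n.choose j : ℤ)) • f (μ (a (n - j)) (b (q + j))) := by
  simp only [NthProduct, map_sum, map_zsmul]

def tripleLeft (ν μ : A → A → A) (a b c : ℤ → A) : ℤ × ℤ × ℤ → A :=
  fun x => ν (μ (a x.1) (b x.2.1)) (c x.2.2)

def tripleRight (ν μ : A → A → A) (a b c : ℤ → A) : ℤ × ℤ × ℤ → A :=
  fun x => ν (c x.1) (μ (a x.2.1) (b x.2.2))

theorem exists_pow_smul_tripleLeft_eq_zero {ν μ α β : A → A → A}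
    (hν : ∀ x y z : A, ν (x + y) z = ν x z + ν y z)
    (hα : ∀ x y z : A, α (x + y) z = α x z + α y z)
    (hid : ∀ x y z : A, ν (μ x y) z = α (β x z) y)
    {a b c : ℤ → A} (hab : IsLocalPair μ a b) (hac : IsLocalPair β a c) :
    ∃ N : ℕ, δ[(0, 1, 0), (0, 0, 1)] ^ N • tripleLeft ν μ a b c = 0 := by
  obtain ⟨Nab, hab⟩ := hab
  obtain ⟨Nac, hac⟩ := hac
  have hab' : δ[(1, 0, 0), (0, 1, 0)] ^ Nab • tripleLeft ν μ a b c = 0 := by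
    ext ⟨i, j, k⟩
    simp only [shift_sub_shift_pow_smul_apply, Prod.smul_mk, Prod.mk_add_mk, smul_eq_mul, mul_one,
      mul_zero, add_zero, tripleLeft]
    exact map_locality_sum_eq_zero hab (AddMonoidHom.mk' (ν · (c k)) (hν · · (c k))) i j
  have hac' : δ[(1, 0, 0), (0, 0, 1)] ^ Nac • tripleLeft ν μ a b c = 0 := by
    ext ⟨i, j, k⟩
    simp only [shift_sub_shift_pow_smul_apply, Prod.smul_mk, Prod.mk_add_mk, smul_eq_mul, mul_one,
      mul_zero, add_zero, tripleLeft, hid]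
    exact map_locality_sum_eq_zero hac (AddMonoidHom.mk' (α · (b j)) (hα · · (b j))) i k
  refine ⟨Nac + Nab, ?_⟩
  rw [← sub_sub_sub_cancel_left _ _ (shift (1, 0, 0))]
  exact (commute_shift_sub_shift _ _ _ _).sub_pow_smul_eq_zero hac' hab'

theorem apply_nthProduct_eq_pow_smul_tripleLeft {ν : A → A → A}
    (hν : ∀ x y z : A, ν (x + y) z = ν x z + ν y z) (μ : A → A → A) (a b c : ℤ → A) (n : ℕ)
    (q w : ℤ) :
    ν (NthProduct μ n a b q) (c w) =
      (δ[(1, 0, 0), (0, 1, 0)] ^ n • tripleLeft ν μ a b c) (0, q, w) := by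
  refine (map_nthProduct (AddMonoidHom.mk' (ν · (c w)) (hν · · (c w))) μ n a b q).trans ?_
  simp only [shift_sub_shift_pow_smul_apply, Prod.smul_mk, Prod.mk_add_mk, smul_eq_mul, mul_one,
    mul_zero, add_zero, zero_add, AddMonoidHom.mk'_apply, tripleLeft]

theorem isLocalPair_nthProduct_left {ν μ α β : A → A → A}
    (hν : ∀ x y z : A, ν (x + y) z = ν x z + ν y z)
    (hα : ∀ x y z : A, α (x + y) z = α x z + α y z)
    (hid : ∀ x y z : A, ν (μ x y) z = α (β x z) y)
    {a b c : ℤ → A} (hab : IsLocalPair μ a b) (hac : IsLocalPair β a c) (n : ℕ) :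
    IsLocalPair ν (NthProduct μ n a b) c := by
  obtain ⟨N, hN⟩ := exists_pow_smul_tripleLeft_eq_zero hν hα hid hab hac
  refine ⟨N, fun m p => ?_⟩
  calc _ = (δ[(0, 1, 0), (0, 0, 1)] ^ N • δ[(1, 0, 0), (0, 1, 0)] ^ n • tripleLeft ν μ a b c)
        (0, m, p) := by
        rw [shift_sub_shift_pow_smul_apply]
        simp only [apply_nthProduct_eq_pow_smul_tripleLeft hν, Prod.smul_mk, Prod.mk_add_mk,
          smul_eq_mul, mul_one, mul_zero, add_zero, add_sub_assoc]
    _ = 0 := by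
      rw [((commute_shift_sub_shift _ _ _ _).pow_pow _ _).smul_smul_comm, hN, smul_zero,
        Pi.zero_apply]

theorem exists_pow_smul_tripleRight_eq_zero {ν μ α₁ α₂ β₁ β₂ γ₁ γ₂ : A → A → A}
    (hν : ∀ x y z : A, ν x (y + z) = ν x y + ν x z)
    (hα : ∀ x y z : A, α₁ (x + y) z = α₁ x z + α₁ y z)
    (hβ : ∀ x y z : A, β₁ (x + y) z = β₁ x z + β₁ y z)
    (hγ : ∀ x y z : A, γ₁ x (y + z) = γ₁ x y + γ₁ x z)
    (hid : ∀ x y z : A, ν z (μ x y) = α₁ (α₂ z x) y - β₁ (β₂ x z) y + γ₁ x (γ₂ z y))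
    {a b c : ℤ → A} (hab : IsLocalPair μ a b) (hca : IsLocalPair α₂ c a)
    (hac : IsLocalPair β₂ a c) (hcb : IsLocalPair γ₂ c b) :
    ∃ N : ℕ, δ[(1, 0, 0), (0, 0, 1)] ^ N • tripleRight ν μ a b c = 0 := by
  obtain ⟨Nab, hab⟩ := hab
  obtain ⟨Nca, hca⟩ := hca
  obtain ⟨Nac, hac⟩ := hac
  obtain ⟨Ncb, hcb⟩ := hcb
  set Hα : ℤ × ℤ × ℤ → A := fun x => α₁ (α₂ (c x.1) (a x.2.1)) (b x.2.2)
  set Hβ : ℤ × ℤ × ℤ → A := fun x => β₁ (β₂ (a x.2.1) (c x.1)) (b x.2.2)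
  set Hγ : ℤ × ℤ × ℤ → A := fun x => γ₁ (a x.2.1) (γ₂ (c x.1) (b x.2.2))
  have hab' : δ[(0, 1, 0), (0, 0, 1)] ^ Nab • tripleRight ν μ a b c = 0 := by
    ext ⟨q, i, j⟩
    simp only [shift_sub_shift_pow_smul_apply, Prod.smul_mk, Prod.mk_add_mk, smul_eq_mul, mul_one,
      mul_zero, add_zero, tripleRight]
    exact map_locality_sum_eq_zero hab (AddMonoidHom.mk' (ν (c q)) (hν (c q))) i j
  have hca' : δ[(1, 0, 0), (0, 1, 0)] ^ Nca • Hα = 0 := by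
    ext ⟨q, i, j⟩
    simp only [shift_sub_shift_pow_smul_apply, Prod.smul_mk, Prod.mk_add_mk, smul_eq_mul, mul_one,
      mul_zero, add_zero, Hα]
    exact map_locality_sum_eq_zero hca (AddMonoidHom.mk' (α₁ · (b j)) (hα · · (b j))) q i
  have hac' : δ[(1, 0, 0), (0, 1, 0)] ^ Nac • Hβ = 0 := by
    rw [← neg_sub]
    refine neg_pow_smul_eq_zero ?_
    ext ⟨q, i, j⟩
    simp only [shift_sub_shift_pow_smul_apply, Prod.smul_mk, Prod.mk_add_mk, smul_eq_mul, mul_one,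
      mul_zero, add_zero, Hβ]
    exact map_locality_sum_eq_zero hac (AddMonoidHom.mk' (β₁ · (b j)) (hβ · · (b j))) i q
  have hcb' : δ[(1, 0, 0), (0, 0, 1)] ^ Ncb • Hγ = 0 := by
    ext ⟨q, i, j⟩
    simp only [shift_sub_shift_pow_smul_apply, Prod.smul_mk, Prod.mk_add_mk, smul_eq_mul, mul_one,
      mul_zero, add_zero, Hγ]
    exact map_locality_sum_eq_zero hcb (AddMonoidHom.mk' (γ₁ (a i)) (hγ (a i))) q j
  have hαβ : δ[(1, 0, 0), (0, 1, 0)] ^ (Nca + Nac) • (Hα - Hβ) = 0 := by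
    rw [smul_sub, pow_smul_eq_zero_of_le hca' (Nat.le_add_right _ _),
      pow_smul_eq_zero_of_le hac' (Nat.le_add_left _ _), sub_zero]
  have hsplit : tripleRight ν μ a b c = (Hα - Hβ) + Hγ := funext fun _ => hid _ _ _
  refine ⟨Nca + Nac + Nab + Ncb, ?_⟩
  rw [← sub_add_sub_cancel _ (shift (0, 1, 0))] at hcb' ⊢
  rw [hsplit] at hab' ⊢
  exact (commute_shift_sub_shift _ _ _ _).add_pow_smul_add_eq_zero hab' hαβ hcb'

theorem apply_nthProduct_eq_pow_smul_tripleRight {ν : A → A → A}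
    (hν : ∀ x y z : A, ν x (y + z) = ν x y + ν x z) (μ : A → A → A) (a b c : ℤ → A) (n : ℕ)
    (q w : ℤ) :
    ν (c q) (NthProduct μ n a b w) =
      (δ[(0, 1, 0), (0, 0, 1)] ^ n • tripleRight ν μ a b c) (q, 0, w) := by
  refine (map_nthProduct (AddMonoidHom.mk' (ν (c q)) (hν (c q))) μ n a b w).trans ?_
  simp only [shift_sub_shift_pow_smul_apply, Prod.smul_mk, Prod.mk_add_mk, smul_eq_mul, mul_one,
    mul_zero, add_zero, zero_add, AddMonoidHom.mk'_apply, tripleRight]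

theorem isLocalPair_nthProduct_right {ν μ α₁ α₂ β₁ β₂ γ₁ γ₂ : A → A → A}
    (hν : ∀ x y z : A, ν x (y + z) = ν x y + ν x z)
    (hα : ∀ x y z : A, α₁ (x + y) z = α₁ x z + α₁ y z)
    (hβ : ∀ x y z : A, β₁ (x + y) z = β₁ x z + β₁ y z)
    (hγ : ∀ x y z : A, γ₁ x (y + z) = γ₁ x y + γ₁ x z)
    (hid : ∀ x y z : A, ν z (μ x y) = α₁ (α₂ z x) y - β₁ (β₂ x z) y + γ₁ x (γ₂ z y))
    {a b c : ℤ → A} (hab : IsLocalPair μ a b) (hca : IsLocalPair α₂ c a)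
    (hac : IsLocalPair β₂ a c) (hcb : IsLocalPair γ₂ c b) (n : ℕ) :
    IsLocalPair ν c (NthProduct μ n a b) := by
  obtain ⟨N, hN⟩ := exists_pow_smul_tripleRight_eq_zero hν hα hβ hγ hid hab hca hac hcb
  refine ⟨N, fun m p => ?_⟩
  calc _ = (δ[(1, 0, 0), (0, 0, 1)] ^ N • δ[(0, 1, 0), (0, 0, 1)] ^ n • tripleRight ν μ a b c)
        (m, 0, p) := by
        rw [shift_sub_shift_pow_smul_apply]
        simp only [apply_nthProduct_eq_pow_smul_tripleRight hν, Prod.smul_mk, Prod.mk_add_mk,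
          smul_eq_mul, mul_one, mul_zero, add_zero, add_sub_assoc]
    _ = 0 := by
      rw [((commute_shift_sub_shift _ _ _ _).pow_pow _ _).smul_smul_comm, hN, smul_zero,
        Pi.zero_apply]

end FormalDistribution

/-- Here `l x y = x ⊣ y` and `r x y = x ⊢ y`. -/
theorem diNovikov_dong_property_general (k : Type*) [Field k]
    (A : Type*) [AddCommGroup A] [Module k A]
    (l r : A → A → A) (hbill : IsBilinear k l) (hbilr : IsBilinear k r)
    (h1 : ∀ a b c : A, l (l a b) c = l (l a c) b)
    (h2 : ∀ a b c : A, r (l a b) c = l (r a c) b)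
    (h3 : ∀ a b c : A, l (r a b) c = r (r a c) b)
    (h4 : ∀ a b c : A, l (l a b) c - l (r b a) c = l a (l b c) - r b (l a c))
    (h5 : ∀ a b c : A, l (l a b) c - l (r b a) c = l a (r b c) - r b (l a c))
    (h6 : ∀ a b c : A, r (l a b) c - r (r b a) c = r a (r b c) - r b (r a c))
    (a b c : ℤ → A)
    (hloc : ∀ μ ∈ ({l, r} : Set (A → A → A)), PairwiseMutuallyLocal μ a b c)
    (n : ℕ) :
    ∀ μ ∈ ({l, r} : Set (A → A → A)), ∀ ν ∈ ({l, r} : Set (A → A → A)),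
      IsLocalPair ν (NthProduct μ n a b) c ∧ IsLocalPair ν c (NthProduct μ n a b) := by
  obtain ⟨hab_l, -, hac_l, hca_l, -, hcb_l⟩ := hloc l (by simp)
  obtain ⟨hab_r, -, hac_r, hca_r, -, hcb_r⟩ := hloc r (by simp)
  have hll : ∀ x y z, l z (l x y) = l (l z x) y - l (r x z) y + r x (l z y) := fun x y z => by
    rw [h4 z x y, sub_add_cancel]
  have hlr : ∀ x y z, l z (r x y) = l (l z x) y - l (r x z) y + r x (l z y) := fun x y z => by
    rw [h5 z x y, sub_add_cancel]
  have hrr : ∀ x y z, r z (r x y) = r (l z x) y - r (r x z) y + r x (r z y) := fun x y z => by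
    rw [h6 z x y, sub_add_cancel]
  have hrl : ∀ x y z, r z (l x y) = l (r z x) y - l (l x z) y + l x (r z y) := fun x y z => by
    rw [← neg_sub, h5 x z y, neg_sub, sub_add_cancel]
  intro μ hμ ν hν
  simp only [Set.mem_insert_iff, Set.mem_singleton_iff] at hμ hν
  rcases hμ with rfl | rfl <;> rcases hν with rfl | rfl
  · exact ⟨isLocalPair_nthProduct_left hbill.1 hbill.1 h1 hab_l hac_l n,
      isLocalPair_nthProduct_right hbill.2.1 hbill.1 hbill.1 hbilr.2.1 hll
        hab_l hca_l hac_r hcb_l n⟩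
  · exact ⟨isLocalPair_nthProduct_left hbilr.1 hbill.1 h2 hab_l hac_r n,
      isLocalPair_nthProduct_right hbilr.2.1 hbill.1 hbill.1 hbill.2.1 hrl
        hab_l hca_r hac_l hcb_r n⟩
  · exact ⟨isLocalPair_nthProduct_left hbill.1 hbilr.1 h3 hab_r hac_r n,
      isLocalPair_nthProduct_right hbill.2.1 hbill.1 hbill.1 hbilr.2.1 hlr
        hab_r hca_l hac_r hcb_l n⟩
  · exact ⟨isLocalPair_nthProduct_left hbilr.1 hbill.1 (fun x y z => (h3 x z y).symm)
        hab_r hac_r n,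
      isLocalPair_nthProduct_right hbilr.2.1 hbilr.1 hbilr.1 hbilr.2.1 hrr
        hab_r hca_l hac_r hcb_r n⟩

/-- Di-Novikov algebras satisfy the Dong property.
Here `l x y = x ⊣ y` and `r x y = x ⊢ y`. -/
theorem diNovikov_dong_property (k : Type*) [Field k] [CharZero k]
    (A : Type*) [AddCommGroup A] [Module k A]
    (l r : A → A → A) (hbill : IsBilinear k l) (hbilr : IsBilinear k r)
    (h1 : ∀ a b c : A, l (l a b) c = l (l a c) b)
    (h2 : ∀ a b c : A, r (l a b) c = l (r a c) b)
    (h3 : ∀ a b c : A, l (r a b) c = r (r a c) b)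
    (h4 : ∀ a b c : A, l (l a b) c - l (r b a) c = l a (l b c) - r b (l a c))
    (h5 : ∀ a b c : A, l (l a b) c - l (r b a) c = l a (r b c) - r b (l a c))
    (h6 : ∀ a b c : A, r (l a b) c - r (r b a) c = r a (r b c) - r b (r a c))
    (h7 : ∀ a b c : A, r (r a b) c - r (l b a) c = r a (r b c) - r b (r a c))
    (a b c : ℤ → A)
    (hloc : ∀ μ ∈ ({l, r} : Set (A → A → A)), PairwiseMutuallyLocal μ a b c)
    (n : ℕ) :
    ∀ μ ∈ ({l, r} : Set (A → A → A)), ∀ ν ∈ ({l, r} : Set (A → A → A)),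
      IsLocalPair ν (NthProduct μ n a b) c ∧ IsLocalPair ν c (NthProduct μ n a b) :=
  diNovikov_dong_property_general k A l r hbill hbilr h1 h2 h3 h4 h5 h6 a b c hloc n
end

section
/- Novikov–Poisson algebras satisfy the Dong property: if A is a Novikov–Poisson algebra over a field k of characteristic 0 with commutative associative product m and Novikov product ν, and a, b, c are pairwise mutually F-local formal distributions over A for the family F = {m, ν}, then for every n ∈ ℕ and every μ₁, μ₂ ∈ F both ordered pairs (a ∘_{μ₁,n} b, c) and (c, a ∘_{μ₁,n} b) are μ₂-local. -/
namespace NPDong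

variable {A : Type*} [AddCommGroup A]

/-- Shift operator on triple-indexed families. -/
def Sh (A : Type*) [AddCommGroup A] (v : ℤ × ℤ × ℤ) :
    (ℤ → ℤ → ℤ → A) →ₗ[ℤ] (ℤ → ℤ → ℤ → A) where
  toFun X := fun r s t => X (r + v.1) (s + v.2.1) (t + v.2.2)
  map_add' _ _ := rfl
  map_smul' _ _ := rfl

lemma Sh_apply (v : ℤ × ℤ × ℤ) (X : ℤ → ℤ → ℤ → A) (r s t : ℤ) :
    Sh A v X r s t = X (r + v.1) (s + v.2.1) (t + v.2.2) := rfl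

lemma Sh_pow_apply (v : ℤ × ℤ × ℤ) (n : ℕ) (X : ℤ → ℤ → ℤ → A) (r s t : ℤ) :
    ((Sh A v) ^ n) X r s t = X (r + n * v.1) (s + n * v.2.1) (t + n * v.2.2) := by
  induction n generalizing X r s t with
  | zero => simp [Sh]
  | succ n ih =>
    rw [pow_succ', Module.End.mul_apply, Sh_apply, ih]
    have h1 : r + v.1 + (n : ℤ) * v.1 = r + (n + 1 : ℕ) * v.1 := by push_cast; ring
    have h2 : s + v.2.1 + (n : ℤ) * v.2.1 = s + (n + 1 : ℕ) * v.2.1 := by push_cast; ring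
    have h3 : t + v.2.2 + (n : ℤ) * v.2.2 = t + (n + 1 : ℕ) * v.2.2 := by push_cast; ring
    rw [h1, h2, h3]

lemma Sh_comm (v w : ℤ × ℤ × ℤ) : Commute (Sh A v) (Sh A w) := by
  show _ = _
  refine LinearMap.ext fun X => ?_
  funext r s t
  simp only [Module.End.mul_apply, Sh_apply]
  rw [add_right_comm r, add_right_comm s, add_right_comm t]

lemma neg_pow_apply (f : Module.End ℤ (ℤ → ℤ → ℤ → A)) (n : ℕ) (X : ℤ → ℤ → ℤ → A) :
    ((-f) ^ n) X = ((-1 : ℤ) ^ n) • (f ^ n) X := by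
  induction n with
  | zero => simp
  | succ n ih =>
    rw [pow_succ', Module.End.mul_apply, LinearMap.neg_apply, ih, LinearMap.map_smul,
      ← Module.End.mul_apply, ← pow_succ']
    rw [← neg_smul]
    congr 1
    ring

/-- The master pointwise expansion of powers of a difference of two shifts. -/
lemma master (v w : ℤ × ℤ × ℤ) (N : ℕ) (X : ℤ → ℤ → ℤ → A) (r s t : ℤ) :
    ((Sh A v - Sh A w) ^ N) X r s t =
      ∑ i ∈ Finset.range (N + 1), ((-1 : ℤ) ^ i * (N.choose i : ℤ)) •
        X (r + i * w.1 + ((N - i : ℕ) : ℤ) * v.1)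
          (s + i * w.2.1 + ((N - i : ℕ) : ℤ) * v.2.1)
          (t + i * w.2.2 + ((N - i : ℕ) : ℤ) * v.2.2) := by
  have hc : Commute (-(Sh A w)) (Sh A v) := (Sh_comm w v).neg_left
  rw [sub_eq_neg_add, hc.add_pow, LinearMap.sum_apply]
  rw [Finset.sum_apply, Finset.sum_apply, Finset.sum_apply]
  refine Finset.sum_congr rfl fun i hi => ?_
  rw [Module.End.mul_apply, Module.End.mul_apply, Module.End.natCast_apply,
    LinearMap.map_smul_of_tower, LinearMap.map_smul_of_tower, neg_pow_apply]
  have : ∀ Y : ℤ → ℤ → ℤ → A, ∀ k : ℤ, (k • Y) r s t = k • (Y r s t) := fun _ _ => rfl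
  have hn : ∀ Y : ℤ → ℤ → ℤ → A, (N.choose i • Y) r s t = N.choose i • (Y r s t) := fun _ => rfl
  rw [hn, this, Sh_pow_apply, Sh_pow_apply, ← natCast_zsmul, smul_smul]
  congr 1
  ring


/-- `u - w` difference operator. -/
def duw (A : Type*) [AddCommGroup A] : Module.End ℤ (ℤ → ℤ → ℤ → A) :=
  Sh A (1, 0, 0) - Sh A (0, 1, 0)

/-- `w - z` difference operator. -/
def dwz (A : Type*) [AddCommGroup A] : Module.End ℤ (ℤ → ℤ → ℤ → A) :=
  Sh A (0, 1, 0) - Sh A (0, 0, 1)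

/-- `u - z` difference operator. -/
def duz (A : Type*) [AddCommGroup A] : Module.End ℤ (ℤ → ℤ → ℤ → A) :=
  Sh A (1, 0, 0) - Sh A (0, 0, 1)

lemma duw_pow_apply (N : ℕ) (X : ℤ → ℤ → ℤ → A) (r s t : ℤ) :
    ((duw A) ^ N) X r s t = ∑ i ∈ Finset.range (N + 1),
      ((-1 : ℤ) ^ i * (N.choose i : ℤ)) • X (r + ((N - i : ℕ) : ℤ)) (s + i) t := by
  rw [duw, master]
  refine Finset.sum_congr rfl fun i hi => ?_
  norm_num

lemma dwz_pow_apply (N : ℕ) (X : ℤ → ℤ → ℤ → A) (r s t : ℤ) :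
    ((dwz A) ^ N) X r s t = ∑ i ∈ Finset.range (N + 1),
      ((-1 : ℤ) ^ i * (N.choose i : ℤ)) • X r (s + ((N - i : ℕ) : ℤ)) (t + i) := by
  rw [dwz, master]
  refine Finset.sum_congr rfl fun i hi => ?_
  norm_num

lemma duz_pow_apply (N : ℕ) (X : ℤ → ℤ → ℤ → A) (r s t : ℤ) :
    ((duz A) ^ N) X r s t = ∑ i ∈ Finset.range (N + 1),
      ((-1 : ℤ) ^ i * (N.choose i : ℤ)) • X (r + ((N - i : ℕ) : ℤ)) s (t + i) := by
  rw [duz, master]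
  refine Finset.sum_congr rfl fun i hi => ?_
  norm_num

lemma dzw_pow_apply (N : ℕ) (X : ℤ → ℤ → ℤ → A) (r s t : ℤ) :
    ((Sh A (0, 0, 1) - Sh A (0, 1, 0)) ^ N) X r s t = ∑ i ∈ Finset.range (N + 1),
      ((-1 : ℤ) ^ i * (N.choose i : ℤ)) • X r (s + i) (t + ((N - i : ℕ) : ℤ)) := by
  rw [master]
  refine Finset.sum_congr rfl fun i hi => ?_
  norm_num
lemma comm_diff (v1 w1 v2 w2 : ℤ × ℤ × ℤ) :
    Commute (Sh A v1 - Sh A w1) (Sh A v2 - Sh A w2) := by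
  show _ = _
  refine LinearMap.ext fun X => ?_
  funext r s t
  simp only [Module.End.mul_apply, LinearMap.sub_apply, Sh_apply, Pi.sub_apply]
  simp only [add_right_comm]
  abel

lemma raise {f : Module.End ℤ (ℤ → ℤ → ℤ → A)} {X : ℤ → ℤ → ℤ → A} {N₀ N : ℕ}
    (h : (f ^ N₀) X = 0) (hle : N₀ ≤ N) : (f ^ N) X = 0 := by
  have : N = (N - N₀) + N₀ := by omega
  rw [this, pow_add, Module.End.mul_apply, h, map_zero]

lemma comm_uw_wz : Commute (duw A) (dwz A) := comm_diff _ _ _ _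
lemma comm_uw_uz : Commute (duw A) (duz A) := comm_diff _ _ _ _
lemma comm_uz_wz : Commute (duz A) (dwz A) := comm_diff _ _ _ _

lemma duz_eq : duz A = duw A + dwz A := by
  rw [duw, dwz, duz, sub_add_sub_cancel]


section Wrap

lemma wrap_zero (W : A → A) (hW : ∀ u v, W (u + v) = W u + W v) : W 0 = 0 :=
  (AddMonoidHom.mk' W hW).map_zero

lemma wrap_sum {ι : Type*} (s : Finset ι) (c : ι → ℤ) (x : ι → A)
    (W : A → A) (hW : ∀ u v, W (u + v) = W u + W v) :
    ∑ i ∈ s, c i • W (x i) = W (∑ i ∈ s, c i • x i) := by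
  let Wh : A →+ A := AddMonoidHom.mk' W hW
  have h1 : ∀ i, c i • W (x i) = Wh (c i • x i) := fun i => (AddMonoidHom.map_zsmul Wh _ _).symm
  simp only [h1]
  exact (map_sum Wh _ _).symm

end Wrap

/-- Reflection of a locality relation. -/
lemma reflect (κ : A → A → A) (p q : ℤ → A) (N : ℕ)
    (h : ∀ m u : ℤ, ∑ i ∈ Finset.range (N + 1),
      ((-1 : ℤ) ^ i * (N.choose i : ℤ)) • κ (p (m + (N : ℤ) - i)) (q (u + i)) = 0) :
    ∀ m u : ℤ, ∑ i ∈ Finset.range (N + 1),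
      ((-1 : ℤ) ^ i * (N.choose i : ℤ)) • κ (p (m + i)) (q (u + (N : ℤ) - i)) = 0 := by
  intro m u
  have key : ∀ j ∈ Finset.range (N + 1),
      ((-1 : ℤ) ^ j * (N.choose j : ℤ)) • κ (p (m + j)) (q (u + (N : ℤ) - j)) =
      (-1 : ℤ) ^ N • (fun i : ℕ => ((-1 : ℤ) ^ i * (N.choose i : ℤ)) •
        κ (p (m + (N : ℤ) - i)) (q (u + i))) (N + 1 - 1 - j) := by
    intro j hj
    have hjN : j ≤ N := by
      have := Finset.mem_range.mp hj; omega
    simp only [Nat.add_sub_cancel]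
    rw [smul_smul]
    have harg1 : m + (N : ℤ) - ((N - j : ℕ) : ℤ) = m + j := by omega
    have harg2 : u + ((N - j : ℕ) : ℤ) = u + (N : ℤ) - j := by omega
    rw [harg1, harg2]
    congr 1
    rw [Nat.choose_symm hjN]
    have hsplit : (-1 : ℤ) ^ N = (-1 : ℤ) ^ (N - j) * (-1 : ℤ) ^ j := by
      rw [← pow_add]; congr 1; omega
    rw [hsplit]
    ring_nf
    have h1 : (-1 : ℤ) ^ ((N - j) * 2) = 1 := Even.neg_one_pow ⟨N - j, by ring⟩
    rw [h1, mul_one]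
  rw [Finset.sum_congr rfl key, ← Finset.smul_sum,
    Finset.sum_range_reflect (fun i => ((-1 : ℤ) ^ i * (N.choose i : ℤ)) •
      κ (p (m + (N : ℤ) - i)) (q (u + i))) (N + 1), h m u, smul_zero]


section Kill

variable (W : ℤ → A → A) (κ : A → A → A) (N : ℕ)

lemma kill_bc (hW : ∀ r u v, W r (u + v) = W r u + W r v) (b c : ℤ → A)
    (h : ∀ m u : ℤ, ∑ i ∈ Finset.range (N + 1),
      ((-1 : ℤ) ^ i * (N.choose i : ℤ)) • κ (b (m + (N : ℤ) - i)) (c (u + i)) = 0) :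
    ((dwz A) ^ N) (fun r s t => W r (κ (b s) (c t))) = 0 := by
  funext r s t
  show ((dwz A) ^ N) (fun r s t => W r (κ (b s) (c t))) r s t = 0
  simp only [dwz_pow_apply]
  have step : ∑ i ∈ Finset.range (N + 1), ((-1 : ℤ) ^ i * (N.choose i : ℤ)) •
      W r (κ (b (s + ((N - i : ℕ) : ℤ))) (c (t + i))) =
      ∑ i ∈ Finset.range (N + 1), ((-1 : ℤ) ^ i * (N.choose i : ℤ)) •
      W r (κ (b (s + (N : ℤ) - i)) (c (t + i))) := by
    refine Finset.sum_congr rfl fun i hi => ?_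
    have hi' : i ≤ N := by have := Finset.mem_range.mp hi; omega
    rw [show s + ((N - i : ℕ) : ℤ) = s + (N : ℤ) - i by omega]
  rw [step, wrap_sum _ _ _ (W r) (hW r), h s t, wrap_zero _ (hW r)]

lemma kill_cb (hW : ∀ r u v, W r (u + v) = W r u + W r v) (b c : ℤ → A)
    (h : ∀ m u : ℤ, ∑ i ∈ Finset.range (N + 1),
      ((-1 : ℤ) ^ i * (N.choose i : ℤ)) • κ (c (m + (N : ℤ) - i)) (b (u + i)) = 0) :
    ((dwz A) ^ N) (fun r s t => W r (κ (c t) (b s))) = 0 := by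
  funext r s t
  show ((dwz A) ^ N) (fun r s t => W r (κ (c t) (b s))) r s t = 0
  simp only [dwz_pow_apply]
  have step : ∑ i ∈ Finset.range (N + 1), ((-1 : ℤ) ^ i * (N.choose i : ℤ)) •
      W r (κ (c (t + i)) (b (s + ((N - i : ℕ) : ℤ)))) =
      ∑ i ∈ Finset.range (N + 1), ((-1 : ℤ) ^ i * (N.choose i : ℤ)) •
      W r (κ (c (t + i)) (b (s + (N : ℤ) - i))) := by
    refine Finset.sum_congr rfl fun i hi => ?_
    have hi' : i ≤ N := by have := Finset.mem_range.mp hi; omega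
    rw [show s + ((N - i : ℕ) : ℤ) = s + (N : ℤ) - i by omega]
  rw [step, wrap_sum _ _ _ (W r) (hW r), reflect κ c b N h t s, wrap_zero _ (hW r)]

lemma kill_ac (hW : ∀ s u v, W s (u + v) = W s u + W s v) (a c : ℤ → A)
    (h : ∀ m u : ℤ, ∑ i ∈ Finset.range (N + 1),
      ((-1 : ℤ) ^ i * (N.choose i : ℤ)) • κ (a (m + (N : ℤ) - i)) (c (u + i)) = 0) :
    ((duz A) ^ N) (fun r s t => W s (κ (a r) (c t))) = 0 := by
  funext r s t
  show ((duz A) ^ N) (fun r s t => W s (κ (a r) (c t))) r s t = 0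
  simp only [duz_pow_apply]
  have step : ∑ i ∈ Finset.range (N + 1), ((-1 : ℤ) ^ i * (N.choose i : ℤ)) •
      W s (κ (a (r + ((N - i : ℕ) : ℤ))) (c (t + i))) =
      ∑ i ∈ Finset.range (N + 1), ((-1 : ℤ) ^ i * (N.choose i : ℤ)) •
      W s (κ (a (r + (N : ℤ) - i)) (c (t + i))) := by
    refine Finset.sum_congr rfl fun i hi => ?_
    have hi' : i ≤ N := by have := Finset.mem_range.mp hi; omega
    rw [show r + ((N - i : ℕ) : ℤ) = r + (N : ℤ) - i by omega]
  rw [step, wrap_sum _ _ _ (W s) (hW s), h r t, wrap_zero _ (hW s)]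

lemma kill_ca (hW : ∀ s u v, W s (u + v) = W s u + W s v) (a c : ℤ → A)
    (h : ∀ m u : ℤ, ∑ i ∈ Finset.range (N + 1),
      ((-1 : ℤ) ^ i * (N.choose i : ℤ)) • κ (c (m + (N : ℤ) - i)) (a (u + i)) = 0) :
    ((duz A) ^ N) (fun r s t => W s (κ (c t) (a r))) = 0 := by
  funext r s t
  show ((duz A) ^ N) (fun r s t => W s (κ (c t) (a r))) r s t = 0
  simp only [duz_pow_apply]
  have step : ∑ i ∈ Finset.range (N + 1), ((-1 : ℤ) ^ i * (N.choose i : ℤ)) •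
      W s (κ (c (t + i)) (a (r + ((N - i : ℕ) : ℤ)))) =
      ∑ i ∈ Finset.range (N + 1), ((-1 : ℤ) ^ i * (N.choose i : ℤ)) •
      W s (κ (c (t + i)) (a (r + (N : ℤ) - i))) := by
    refine Finset.sum_congr rfl fun i hi => ?_
    have hi' : i ≤ N := by have := Finset.mem_range.mp hi; omega
    rw [show r + ((N - i : ℕ) : ℤ) = r + (N : ℤ) - i by omega]
  rw [step, wrap_sum _ _ _ (W s) (hW s), reflect κ c a N h t r, wrap_zero _ (hW s)]

lemma h1_op (hW : ∀ t u v, W t (u + v) = W t u + W t v) (μ₁ : A → A → A) (a b : ℤ → A)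
    (h : ∀ m u : ℤ, ∑ i ∈ Finset.range (N + 1),
      ((-1 : ℤ) ^ i * (N.choose i : ℤ)) • μ₁ (a (m + (N : ℤ) - i)) (b (u + i)) = 0) :
    ((duw A) ^ N) (fun r s t => W t (μ₁ (a r) (b s))) = 0 := by
  funext r s t
  show ((duw A) ^ N) (fun r s t => W t (μ₁ (a r) (b s))) r s t = 0
  simp only [duw_pow_apply]
  have step : ∑ i ∈ Finset.range (N + 1), ((-1 : ℤ) ^ i * (N.choose i : ℤ)) •
      W t (μ₁ (a (r + ((N - i : ℕ) : ℤ))) (b (s + i))) =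
      ∑ i ∈ Finset.range (N + 1), ((-1 : ℤ) ^ i * (N.choose i : ℤ)) •
      W t (μ₁ (a (r + (N : ℤ) - i)) (b (s + i))) := by
    refine Finset.sum_congr rfl fun i hi => ?_
    have hi' : i ≤ N := by have := Finset.mem_range.mp hi; omega
    rw [show r + ((N - i : ℕ) : ℤ) = r + (N : ℤ) - i by omega]
  rw [step, wrap_sum _ _ _ (W t) (hW t), h r s, wrap_zero _ (hW t)]

end Kill


/-- Core operator-level Dong argument. -/
lemma core (N n : ℕ) (X : ℤ → ℤ → ℤ → A)
    (h1 : ((duw A) ^ N) X = 0) (h2 : ((duz A) ^ N * (dwz A) ^ N) X = 0) :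
    ((dwz A) ^ (3 * N) * (duw A) ^ n) X = 0 := by
  have hexp : (3 : ℕ) * N = N + 2 * N := by omega
  rw [hexp, pow_add, mul_assoc, Module.End.mul_apply]
  have hdwz : (dwz A) = duz A + (-(duw A)) := by
    rw [duz_eq]; abel
  have hc : Commute (duz A) (-(duw A)) := (comm_uw_uz (A := A)).symm.neg_right
  have hexp2 : ((dwz A) ^ (2 * N) * (duw A) ^ n) X =
      ∑ i ∈ Finset.range (2 * N + 1),
        ((duz A) ^ i * (-(duw A)) ^ (2 * N - i) * ((2 * N).choose i : Module.End ℤ (ℤ → ℤ → ℤ → A)))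
          (((duw A) ^ n) X) := by
    rw [hdwz, hc.add_pow, Finset.sum_mul, LinearMap.sum_apply]
    refine Finset.sum_congr rfl fun i hi => ?_
    rw [mul_assoc, Module.End.mul_apply, mul_assoc]
    rw [Module.End.mul_apply, Module.End.mul_apply, Module.End.mul_apply, Module.End.mul_apply]
  rw [hexp2, map_sum]
  refine Finset.sum_eq_zero fun i hi => ?_
  have hiN : i ≤ 2 * N := by have := Finset.mem_range.mp hi; omega
  rw [Module.End.mul_apply, Module.End.mul_apply, Module.End.natCast_apply, neg_pow_apply]
  simp only [LinearMap.map_smul_of_tower, LinearMap.map_smul]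
  have hinner : ((dwz A) ^ N) (((duz A) ^ i) (((duw A) ^ (2 * N - i)) (((duw A) ^ n) X))) = 0 := by
    rw [← Module.End.mul_apply ((duw A) ^ (2 * N - i)), ← pow_add]
    rcases le_or_gt i N with hle | hlt
    · have hsplit : 2 * N - i + n = (N - i + n) + N := by omega
      rw [hsplit, pow_add, Module.End.mul_apply, h1, map_zero, map_zero, map_zero]
    · have hsplit : i = (i - N) + N := by omega
      set m' := 2 * N - i + n with hm'
      have swap1 : ((duz A) ^ i) (((duw A) ^ m') X) = ((duw A) ^ m') (((duz A) ^ i) X) := by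
        rw [← Module.End.mul_apply, ← Module.End.mul_apply,
          ((comm_uw_uz (A := A)).symm.pow_pow i m').eq]
      have swap2 : ((dwz A) ^ N) (((duw A) ^ m') (((duz A) ^ i) X)) =
          ((duw A) ^ m') (((dwz A) ^ N) (((duz A) ^ i) X)) := by
        rw [← Module.End.mul_apply, ← Module.End.mul_apply,
          ((comm_uw_wz (A := A)).symm.pow_pow N m').eq, Module.End.mul_apply,
          Module.End.mul_apply]
      have e2 : ((dwz A) ^ N) (((duz A) ^ N) X) = ((duz A) ^ N * (dwz A) ^ N) X := by
        rw [← Module.End.mul_apply, ((comm_uz_wz (A := A)).symm.pow_pow N N).eq]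
      have swap3 : ((dwz A) ^ N) (((duz A) ^ i) X) =
          ((duz A) ^ (i - N)) (((duz A) ^ N * (dwz A) ^ N) X) := by
        conv_lhs => rw [hsplit]
        rw [pow_add, Module.End.mul_apply, ← Module.End.mul_apply ((dwz A) ^ N),
          ((comm_uz_wz (A := A)).symm.pow_pow N (i - N)).eq, Module.End.mul_apply, e2]
      rw [swap1, swap2, swap3, h2, map_zero, map_zero]
  rw [hinner, smul_zero, smul_zero]


/-- Assembly: from locality data in operator form, conclude the key operator vanishing. -/
lemma main_op (X X₁ X₂ X₃ : ℤ → ℤ → ℤ → A) (n : ℕ)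
    (hX : X = X₁ + X₂ - X₃)
    (h1 : ∃ N, ((duw A) ^ N) X = 0)
    (k1 : ∃ N, ((dwz A) ^ N) X₁ = 0 ∨ ((duz A) ^ N) X₁ = 0)
    (k2 : ∃ N, ((dwz A) ^ N) X₂ = 0 ∨ ((duz A) ^ N) X₂ = 0)
    (k3 : ∃ N, ((dwz A) ^ N) X₃ = 0 ∨ ((duz A) ^ N) X₃ = 0) :
    ∃ M, (((dwz A) ^ M) * ((duw A) ^ n)) X = 0 := by
  obtain ⟨N₁, h1⟩ := h1
  obtain ⟨Na, k1⟩ := k1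
  obtain ⟨Nb, k2⟩ := k2
  obtain ⟨Nc, k3⟩ := k3
  set N := max N₁ (max Na (max Nb Nc)) with hN
  have pair : ∀ (Y : ℤ → ℤ → ℤ → A) (N₀ : ℕ), N₀ ≤ N →
      (((dwz A) ^ N₀) Y = 0 ∨ ((duz A) ^ N₀) Y = 0) →
      (((duz A) ^ N) * ((dwz A) ^ N)) Y = 0 := by
    intro Y N₀ hle hk
    rcases hk with hk | hk
    · rw [Module.End.mul_apply, raise hk hle, map_zero]
    · rw [((comm_uz_wz (A := A)).pow_pow N N).eq, Module.End.mul_apply, raise hk hle, map_zero]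
  refine ⟨3 * N, core N n X (raise h1 (by omega)) ?_⟩
  have e1 := pair X₁ Na (by omega) k1
  have e2 := pair X₂ Nb (by omega) k2
  have e3 := pair X₃ Nc (by omega) k3
  rw [hX, map_sub, map_add, e1, e2, e3, add_zero, sub_zero]

/-- Translate the operator vanishing into the left locality statement. -/
lemma trans_left (μ₁ μ₂ : A → A → A)
    (h2add : ∀ x y z : A, μ₂ (x + y) z = μ₂ x z + μ₂ y z)
    (a b c : ℤ → A) (n M : ℕ)
    (h : (((dwz A) ^ M) * ((duw A) ^ n)) (fun r s t => μ₂ (μ₁ (a r) (b s)) (c t)) = 0) :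
    ∀ m p : ℤ, ∑ i ∈ Finset.range (M + 1), ((-1 : ℤ) ^ i * (M.choose i : ℤ)) •
      μ₂ ((NthProduct μ₁ n a b) (m + (M : ℤ) - i)) (c (p + i)) = 0 := by
  intro m p
  set X : ℤ → ℤ → ℤ → A := fun r s t => μ₂ (μ₁ (a r) (b s)) (c t) with hX
  have h0 : ((dwz A) ^ M) (((duw A) ^ n) X) 0 m p = 0 := by
    rw [← Module.End.mul_apply, h]; rfl
  rw [dwz_pow_apply] at h0
  refine Eq.trans ?_ h0
  refine Finset.sum_congr rfl fun i hi => ?_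
  have hiM : i ≤ M := by have := Finset.mem_range.mp hi; omega
  rw [duw_pow_apply]
  congr 1
  simp only [NthProduct]
  rw [← wrap_sum _ _ _ (fun x => μ₂ x (c (p + i))) (fun u v => h2add u v _)]
  refine Finset.sum_congr rfl fun j hj => ?_
  have hjn : j ≤ n := by have := Finset.mem_range.mp hj; omega
  simp only [hX]
  rw [show (0 : ℤ) + ((n - j : ℕ) : ℤ) = (n : ℤ) - j by omega,
    show m + (M : ℤ) - i + j = (m + ((M - i : ℕ) : ℤ)) + j by omega]

/-- Translate the operator vanishing into the right locality statement. -/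
lemma trans_right (μ₁ μ₂ : A → A → A)
    (h2add : ∀ x y z : A, μ₂ x (y + z) = μ₂ x y + μ₂ x z)
    (a b c : ℤ → A) (n M : ℕ)
    (h : (((dwz A) ^ M) * ((duw A) ^ n)) (fun r s t => μ₂ (c t) (μ₁ (a r) (b s))) = 0) :
    ∀ m p : ℤ, ∑ i ∈ Finset.range (M + 1), ((-1 : ℤ) ^ i * (M.choose i : ℤ)) •
      μ₂ (c (m + (M : ℤ) - i)) ((NthProduct μ₁ n a b) (p + i)) = 0 := by
  intro m p
  set X : ℤ → ℤ → ℤ → A := fun r s t => μ₂ (c t) (μ₁ (a r) (b s)) with hX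
  have hneg : Sh A (0, 0, 1) - Sh A (0, 1, 0) = -(dwz A) := by
    rw [dwz]; abel
  have h0 : ((Sh A (0, 0, 1) - Sh A (0, 1, 0)) ^ M) (((duw A) ^ n) X) 0 p m = 0 := by
    rw [hneg, neg_pow_apply, ← Module.End.mul_apply, h, smul_zero]; rfl
  rw [dzw_pow_apply] at h0
  refine Eq.trans ?_ h0
  refine Finset.sum_congr rfl fun i hi => ?_
  have hiM : i ≤ M := by have := Finset.mem_range.mp hi; omega
  rw [duw_pow_apply]
  congr 1
  simp only [NthProduct]
  rw [← wrap_sum _ _ _ (fun x => μ₂ (c (m + (M : ℤ) - i)) x) (fun u v => h2add _ u v)]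
  refine Finset.sum_congr rfl fun j hj => ?_
  have hjn : j ≤ n := by have := Finset.mem_range.mp hj; omega
  simp only [hX]
  rw [show (0 : ℤ) + ((n - j : ℕ) : ℤ) = (n : ℤ) - j by omega,
    show m + (M : ℤ) - i = m + ((M - i : ℕ) : ℤ) by omega]

end NPDong

/-- Novikov–Poisson algebras satisfy the Dong property.
Here `m` is the commutative associative product and `ν` the Novikov product. -/
theorem novikovPoisson_dong_property (k : Type*) [Field k] [CharZero k]
    (A : Type*) [AddCommGroup A] [Module k A]
    (m ν : A → A → A) (hbilm : IsBilinear k m) (hbilν : IsBilinear k ν)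
    (hcomm : ∀ x y : A, m x y = m y x)
    (hassoc : ∀ x y z : A, m (m x y) z = m x (m y z))
    (hlsym : ∀ x y z : A, ν (ν x y) z - ν x (ν y z) = ν (ν y x) z - ν y (ν x z))
    (hrcom : ∀ x y z : A, ν (ν x y) z = ν (ν x z) y)
    (hcomp1 : ∀ x y z : A, ν (m x y) z = m x (ν y z))
    (hcomp2 : ∀ x y z : A, m (ν x y) z - ν x (m y z) = m (ν y x) z - ν y (m x z))
    (a b c : ℤ → A)
    (hloc : ∀ μ ∈ ({m, ν} : Set (A → A → A)), PairwiseMutuallyLocal μ a b c)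
    (n : ℕ) :
    ∀ μ₁ ∈ ({m, ν} : Set (A → A → A)), ∀ μ₂ ∈ ({m, ν} : Set (A → A → A)),
      IsLocalPair μ₂ (NthProduct μ₁ n a b) c ∧ IsLocalPair μ₂ c (NthProduct μ₁ n a b) := by
  obtain ⟨habm, hbam, hacm, hcam, hbcm, hcbm⟩ := hloc m (Set.mem_insert _ _)
  obtain ⟨habv, hbav, hacv, hcav, hbcv, hcbv⟩ :=
    hloc ν (Set.mem_insert_iff.mpr (Or.inr rfl))
  obtain ⟨hmL, hmR, -, -⟩ := hbilm
  obtain ⟨hvL, hvR, -, -⟩ := hbilν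
  have key : ∀ P Q R S : A, P - Q = R - S → P = (Q + R) - S := by
    intro P Q R S h
    have h2 := sub_eq_sub_iff_add_eq_add.mp h
    rw [eq_sub_iff_add_eq, h2]
    exact add_comm R Q
  have key2 : ∀ P Q R S : A, P - Q = R - S → Q = (P + S) - R := by
    intro P Q R S h
    refine key Q P S R ?_
    rw [← neg_sub, h, neg_sub]
  have id_vm : ∀ x y z : A, m (ν x y) z = (ν x (m y z) + ν (m y z) x) - ν y (m x z) := by
    intro x y z
    have e : m (ν y x) z = ν (m y z) x := by
      rw [hcomm (ν y x) z, ← hcomp1 z y x, hcomm z y]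
    have h2 := hcomp2 x y z
    rw [e] at h2
    exact key _ _ _ _ h2
  have id_vv : ∀ x y z : A, ν (ν x y) z = (ν x (ν y z) + ν (ν y z) x) - ν y (ν x z) := by
    intro x y z
    have h1 := hlsym x y z
    rw [hrcom y x z] at h1
    exact key _ _ _ _ h1
  have id_mv_r : ∀ x y z : A, ν z (m x y) = (m (ν z x) y + ν x (m z y)) - m (ν x z) y :=
    fun x y z => key2 _ _ _ _ (hcomp2 z x y)
  have id_vv_r : ∀ x y z : A, ν z (ν x y) = (ν (ν z x) y + ν x (ν z y)) - ν (ν x z) y :=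
    fun x y z => key2 _ _ _ _ (hlsym z x y)
  intro μ₁ hμ₁ μ₂ hμ₂
  simp only [Set.mem_insert_iff, Set.mem_singleton_iff] at hμ₁ hμ₂
  rcases hμ₁ with h1eq | h1eq <;> rcases hμ₂ with h2eq | h2eq <;> rw [h1eq, h2eq]
  · -- μ₁ = m, μ₂ = m
    constructor
    · obtain ⟨N1, hab'⟩ := habm
      obtain ⟨Nb, hbc'⟩ := hbcm
      obtain ⟨M, hop⟩ := NPDong.main_op
        (fun r s t => m (m (a r) (b s)) (c t))
        (fun r s t => m (a r) (m (b s) (c t)))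
        (fun r s t => m (a r) (m (b s) (c t)))
        (fun r s t => m (a r) (m (b s) (c t))) n
        (by funext r s t
            simp only [Pi.add_apply, Pi.sub_apply]
            rw [add_sub_cancel_right]
            exact hassoc (a r) (b s) (c t))
        ⟨N1, NPDong.h1_op (fun t x => m x (c t)) N1 (fun t u v => hmL u v (c t)) m a b hab'⟩
        ⟨Nb, Or.inl (NPDong.kill_bc (fun r x => m (a r) x) m Nb
          (fun r u v => hmR (a r) u v) b c hbc')⟩
        ⟨Nb, Or.inl (NPDong.kill_bc (fun r x => m (a r) x) m Nb
          (fun r u v => hmR (a r) u v) b c hbc')⟩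
        ⟨Nb, Or.inl (NPDong.kill_bc (fun r x => m (a r) x) m Nb
          (fun r u v => hmR (a r) u v) b c hbc')⟩
      exact ⟨M, NPDong.trans_left m m hmL a b c n M hop⟩
    · obtain ⟨N1, hab'⟩ := habm
      obtain ⟨Nc, hca'⟩ := hcam
      obtain ⟨M, hop⟩ := NPDong.main_op
        (fun r s t => m (c t) (m (a r) (b s)))
        (fun r s t => m (m (c t) (a r)) (b s))
        (fun r s t => m (m (c t) (a r)) (b s))
        (fun r s t => m (m (c t) (a r)) (b s)) n
        (by funext r s t
            simp only [Pi.add_apply, Pi.sub_apply]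
            rw [add_sub_cancel_right]
            exact (hassoc (c t) (a r) (b s)).symm)
        ⟨N1, NPDong.h1_op (fun t x => m (c t) x) N1 (fun t u v => hmR (c t) u v) m a b hab'⟩
        ⟨Nc, Or.inr (NPDong.kill_ca (fun s x => m x (b s)) m Nc
          (fun s u v => hmL u v (b s)) a c hca')⟩
        ⟨Nc, Or.inr (NPDong.kill_ca (fun s x => m x (b s)) m Nc
          (fun s u v => hmL u v (b s)) a c hca')⟩
        ⟨Nc, Or.inr (NPDong.kill_ca (fun s x => m x (b s)) m Nc
          (fun s u v => hmL u v (b s)) a c hca')⟩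
      exact ⟨M, NPDong.trans_right m m hmR a b c n M hop⟩
  · -- μ₁ = m, μ₂ = ν
    constructor
    · obtain ⟨N1, hab'⟩ := habm
      obtain ⟨Nb, hbc'⟩ := hbcv
      obtain ⟨M, hop⟩ := NPDong.main_op
        (fun r s t => ν (m (a r) (b s)) (c t))
        (fun r s t => m (a r) (ν (b s) (c t)))
        (fun r s t => m (a r) (ν (b s) (c t)))
        (fun r s t => m (a r) (ν (b s) (c t))) n
        (by funext r s t
            simp only [Pi.add_apply, Pi.sub_apply]
            rw [add_sub_cancel_right]
            exact hcomp1 (a r) (b s) (c t))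
        ⟨N1, NPDong.h1_op (fun t x => ν x (c t)) N1 (fun t u v => hvL u v (c t)) m a b hab'⟩
        ⟨Nb, Or.inl (NPDong.kill_bc (fun r x => m (a r) x) ν Nb
          (fun r u v => hmR (a r) u v) b c hbc')⟩
        ⟨Nb, Or.inl (NPDong.kill_bc (fun r x => m (a r) x) ν Nb
          (fun r u v => hmR (a r) u v) b c hbc')⟩
        ⟨Nb, Or.inl (NPDong.kill_bc (fun r x => m (a r) x) ν Nb
          (fun r u v => hmR (a r) u v) b c hbc')⟩
      exact ⟨M, NPDong.trans_left m ν hvL a b c n M hop⟩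
    · obtain ⟨N1, hab'⟩ := habm
      obtain ⟨Nca, hca'⟩ := hcav
      obtain ⟨Ncb, hcb'⟩ := hcbm
      obtain ⟨Nac, hac'⟩ := hacv
      obtain ⟨M, hop⟩ := NPDong.main_op
        (fun r s t => ν (c t) (m (a r) (b s)))
        (fun r s t => m (ν (c t) (a r)) (b s))
        (fun r s t => ν (a r) (m (c t) (b s)))
        (fun r s t => m (ν (a r) (c t)) (b s)) n
        (by funext r s t
            simp only [Pi.add_apply, Pi.sub_apply]
            exact id_mv_r (a r) (b s) (c t))
        ⟨N1, NPDong.h1_op (fun t x => ν (c t) x) N1 (fun t u v => hvR (c t) u v) m a b hab'⟩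
        ⟨Nca, Or.inr (NPDong.kill_ca (fun s x => m x (b s)) ν Nca
          (fun s u v => hmL u v (b s)) a c hca')⟩
        ⟨Ncb, Or.inl (NPDong.kill_cb (fun r x => ν (a r) x) m Ncb
          (fun r u v => hvR (a r) u v) b c hcb')⟩
        ⟨Nac, Or.inr (NPDong.kill_ac (fun s x => m x (b s)) ν Nac
          (fun s u v => hmL u v (b s)) a c hac')⟩
      exact ⟨M, NPDong.trans_right m ν hvR a b c n M hop⟩
  · -- μ₁ = ν, μ₂ = m
    constructor
    · obtain ⟨N1, hab'⟩ := habv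
      obtain ⟨Nb, hbc'⟩ := hbcm
      obtain ⟨Nc, hac'⟩ := hacm
      obtain ⟨M, hop⟩ := NPDong.main_op
        (fun r s t => m (ν (a r) (b s)) (c t))
        (fun r s t => ν (a r) (m (b s) (c t)))
        (fun r s t => ν (m (b s) (c t)) (a r))
        (fun r s t => ν (b s) (m (a r) (c t))) n
        (by funext r s t
            simp only [Pi.add_apply, Pi.sub_apply]
            exact id_vm (a r) (b s) (c t))
        ⟨N1, NPDong.h1_op (fun t x => m x (c t)) N1 (fun t u v => hmL u v (c t)) ν a b hab'⟩
        ⟨Nb, Or.inl (NPDong.kill_bc (fun r x => ν (a r) x) m Nb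
          (fun r u v => hvR (a r) u v) b c hbc')⟩
        ⟨Nb, Or.inl (NPDong.kill_bc (fun r x => ν x (a r)) m Nb
          (fun r u v => hvL u v (a r)) b c hbc')⟩
        ⟨Nc, Or.inr (NPDong.kill_ac (fun s x => ν (b s) x) m Nc
          (fun s u v => hvR (b s) u v) a c hac')⟩
      exact ⟨M, NPDong.trans_left ν m hmL a b c n M hop⟩
    · obtain ⟨N1, hab'⟩ := habv
      obtain ⟨Nb, hbc'⟩ := hbcm
      obtain ⟨Nc, hac'⟩ := hacm
      obtain ⟨M, hop⟩ := NPDong.main_op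
        (fun r s t => m (c t) (ν (a r) (b s)))
        (fun r s t => ν (a r) (m (b s) (c t)))
        (fun r s t => ν (m (b s) (c t)) (a r))
        (fun r s t => ν (b s) (m (a r) (c t))) n
        (by funext r s t
            simp only [Pi.add_apply, Pi.sub_apply]
            rw [hcomm (c t) (ν (a r) (b s))]
            exact id_vm (a r) (b s) (c t))
        ⟨N1, NPDong.h1_op (fun t x => m (c t) x) N1 (fun t u v => hmR (c t) u v) ν a b hab'⟩
        ⟨Nb, Or.inl (NPDong.kill_bc (fun r x => ν (a r) x) m Nb
          (fun r u v => hvR (a r) u v) b c hbc')⟩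
        ⟨Nb, Or.inl (NPDong.kill_bc (fun r x => ν x (a r)) m Nb
          (fun r u v => hvL u v (a r)) b c hbc')⟩
        ⟨Nc, Or.inr (NPDong.kill_ac (fun s x => ν (b s) x) m Nc
          (fun s u v => hvR (b s) u v) a c hac')⟩
      exact ⟨M, NPDong.trans_right ν m hmR a b c n M hop⟩
  · -- μ₁ = ν, μ₂ = ν
    constructor
    · obtain ⟨N1, hab'⟩ := habv
      obtain ⟨Nb, hbc'⟩ := hbcv
      obtain ⟨Nc, hac'⟩ := hacv
      obtain ⟨M, hop⟩ := NPDong.main_op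
        (fun r s t => ν (ν (a r) (b s)) (c t))
        (fun r s t => ν (a r) (ν (b s) (c t)))
        (fun r s t => ν (ν (b s) (c t)) (a r))
        (fun r s t => ν (b s) (ν (a r) (c t))) n
        (by funext r s t
            simp only [Pi.add_apply, Pi.sub_apply]
            exact id_vv (a r) (b s) (c t))
        ⟨N1, NPDong.h1_op (fun t x => ν x (c t)) N1 (fun t u v => hvL u v (c t)) ν a b hab'⟩
        ⟨Nb, Or.inl (NPDong.kill_bc (fun r x => ν (a r) x) ν Nb
          (fun r u v => hvR (a r) u v) b c hbc')⟩
        ⟨Nb, Or.inl (NPDong.kill_bc (fun r x => ν x (a r)) ν Nb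
          (fun r u v => hvL u v (a r)) b c hbc')⟩
        ⟨Nc, Or.inr (NPDong.kill_ac (fun s x => ν (b s) x) ν Nc
          (fun s u v => hvR (b s) u v) a c hac')⟩
      exact ⟨M, NPDong.trans_left ν ν hvL a b c n M hop⟩
    · obtain ⟨N1, hab'⟩ := habv
      obtain ⟨Nca, hca'⟩ := hcav
      obtain ⟨Ncb, hcb'⟩ := hcbv
      obtain ⟨Nac, hac'⟩ := hacv
      obtain ⟨M, hop⟩ := NPDong.main_op
        (fun r s t => ν (c t) (ν (a r) (b s)))
        (fun r s t => ν (ν (c t) (a r)) (b s))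
        (fun r s t => ν (a r) (ν (c t) (b s)))
        (fun r s t => ν (ν (a r) (c t)) (b s)) n
        (by funext r s t
            simp only [Pi.add_apply, Pi.sub_apply]
            exact id_vv_r (a r) (b s) (c t))
        ⟨N1, NPDong.h1_op (fun t x => ν (c t) x) N1 (fun t u v => hvR (c t) u v) ν a b hab'⟩
        ⟨Nca, Or.inr (NPDong.kill_ca (fun s x => ν x (b s)) ν Nca
          (fun s u v => hvL u v (b s)) a c hca')⟩
        ⟨Ncb, Or.inl (NPDong.kill_cb (fun r x => ν (a r) x) ν Ncb
          (fun r u v => hvR (a r) u v) b c hcb')⟩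
        ⟨Nac, Or.inr (NPDong.kill_ac (fun s x => ν x (b s)) ν Nac
          (fun s u v => hvL u v (b s)) a c hac')⟩
      exact ⟨M, NPDong.trans_right ν ν hvR a b c n M hop⟩
end

section
/- Zinbiel (pre-commutative) algebras do not satisfy the Dong property: there exist a Zinbiel algebra A over ℚ with product μ, pairwise mutually μ-local formal distributions a, b, c over A, and n ∈ ℕ such that at least one of the ordered pairs (a ∘_{μ,n} b, c), (c, a ∘_{μ,n} b) is not μ-local. -/
/-- The underlying space of the counterexample: a 5-dimensional `ℚ`-vector space with
basis `x, y, u, v, t`. -/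
abbrev Amod : Type := ℚ × ℚ × ℚ × ℚ × ℚ

/-- The Zinbiel product: `x·y = v`, `y·x = -v`, `u·v = t`, all other basis products zero. -/
def myMu : Amod → Amod → Amod :=
  fun p q => (0, 0, 0, p.1 * q.2.1 - p.2.1 * q.1, p.2.2.1 * q.2.2.2.1)

lemma key (N : ℕ) :
    ∑ s ∈ Finset.range (N + 1),
      ((-1 : ℤ) ^ s * (N.choose s : ℤ)) •
        ((3:ℚ) ^ ((0:ℤ) + (N:ℤ) - (s:ℤ)) * (2:ℚ) ^ ((0:ℤ) + (s:ℤ))) = 1 := by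
  have h := add_pow (-2 : ℚ) 3 N
  norm_num at h
  rw [h]
  refine Finset.sum_congr rfl fun s hs => ?_
  simp only [Finset.mem_range] at hs
  rw [show (0:ℤ) + (N:ℤ) - (s:ℤ) = ((N - s : ℕ) : ℤ) by omega,
    show (0:ℤ) + (s:ℤ) = ((s : ℕ) : ℤ) by rw [zero_add], zpow_natCast, zpow_natCast,
    zsmul_eq_mul]
  push_cast
  rw [show ((-2:ℚ))^s = (-1)^s * 2^s by rw [← neg_one_mul, mul_pow]]
  ring

/-- Zinbiel (pre-commutative) algebras do not satisfy the Dong property. -/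
theorem zinbiel_not_dong_property :
    ∃ (A : Type) (_ : AddCommGroup A) (_ : Module ℚ A) (μ : A → A → A),
      IsBilinear ℚ μ ∧
      (∀ x y z : A, μ (μ x y) z = μ x (μ y z) + μ x (μ z y)) ∧
      ∃ a b c : ℤ → A, PairwiseMutuallyLocal μ a b c ∧
        ∃ n : ℕ,
          ¬ IsLocalPair μ (NthProduct μ n a b) c ∨
          ¬ IsLocalPair μ c (NthProduct μ n a b) := by
  refine ⟨Amod, inferInstance, inferInstance, myMu, ?_, ?_, ?_⟩
  · refine ⟨?_, ?_, ?_, ?_⟩ <;> intros <;>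
      simp [myMu, Prod.ext_iff, smul_eq_mul] <;> constructor <;> ring
  · intro x y z
    simp [myMu, Prod.ext_iff]
    ring
  · refine ⟨fun s => ((2:ℚ)^s, 0, 0, 0, 0), fun s => (0, (2:ℚ)^s, 0, 0, 0),
      fun s => (0, 0, (3:ℚ)^s, 0, 0), ⟨?_, ?_, ?_, ?_, ?_, ?_⟩, 0, Or.inr ?_⟩
    · refine ⟨1, fun m p => ?_⟩
      simp [myMu, Finset.sum_range_succ, Prod.ext_iff, smul_eq_mul]
      rw [zpow_add₀ (two_ne_zero) m 1, zpow_add₀ (two_ne_zero) p 1]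
      ring
    · refine ⟨1, fun m p => ?_⟩
      simp [myMu, Finset.sum_range_succ, Prod.ext_iff, smul_eq_mul]
      rw [zpow_add₀ (two_ne_zero) m 1, zpow_add₀ (two_ne_zero) p 1]
      ring
    · exact ⟨0, fun m p => by simp [myMu]⟩
    · exact ⟨0, fun m p => by simp [myMu]⟩
    · exact ⟨0, fun m p => by simp [myMu]⟩
    · exact ⟨0, fun m p => by simp [myMu]⟩
    · have hd : ∀ m : ℤ, NthProduct myMu 0 (fun s => ((2:ℚ)^s, 0, 0, 0, 0))
          (fun s => (0, (2:ℚ)^s, 0, 0, 0)) m = (0, 0, 0, (2:ℚ)^m, 0) := by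
        intro m
        simp [NthProduct, myMu]
      rintro ⟨N, h⟩
      have h0 := h 0 0
      have h5 := congrArg (fun v : Amod => v.2.2.2.2) h0
      simp only [hd, myMu, Prod.snd_sum, Prod.smul_snd, Prod.snd_zero] at h5
      rw [key N] at h5
      exact one_ne_zero h5
end

section
/- Pre-Lie (left-symmetric) algebras do not satisfy the Dong property: there exist a left-symmetric algebra A over ℚ with product μ, pairwise mutually μ-local formal distributions a, b, c over A, and n ∈ ℕ such that at least one of the ordered pairs (a ∘_{μ,n} b, c), (c, a ∘_{μ,n} b) is not μ-local. -/
open Finset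

section Geometric

variable {k A : Type*} [Field k] [AddCommGroup A] [Module k A] {μ : A → A → A}

def geomDistrib (r : k) (x : A) : ℤ → A :=
  fun m => r ^ m • x

theorem IsBilinear.map_smul_smul (hμ : IsBilinear k μ) (r q : k) (x y : A) :
    μ (r • x) (q • y) = (r * q) • μ x y := by
  rw [hμ.2.2.1, hμ.2.2.2, smul_smul]

theorem binomial_sum_geomDistrib (hμ : IsBilinear k μ) {r q : k} (hr : r ≠ 0) (hq : q ≠ 0)
    (x y : A) (N : ℕ) (m p : ℤ) :
    ∑ s ∈ range (N + 1), ((-1 : ℤ) ^ s * (N.choose s : ℤ)) •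
        μ (geomDistrib r x (m + N - s)) (geomDistrib q y (p + s)) =
      (r ^ m * q ^ p * (r - q) ^ N) • μ x y := by
  have term : ∀ s ∈ range (N + 1), ((-1 : ℤ) ^ s * (N.choose s : ℤ)) •
      μ (geomDistrib r x (m + N - s)) (geomDistrib q y (p + s)) =
        (r ^ m * q ^ p * ((-q) ^ s * r ^ (N - s) * N.choose s)) • μ x y := by
    intro s hs
    have hsN : s ≤ N := Nat.lt_succ_iff.mp (mem_range.mp hs)
    have hexp : m + (N : ℤ) - s = m + ((N - s : ℕ) : ℤ) := by push_cast [Nat.cast_sub hsN]; ring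
    rw [geomDistrib, geomDistrib, hμ.map_smul_smul, ← Int.cast_smul_eq_zsmul k, smul_smul, hexp,
      zpow_add₀ hr, zpow_add₀ hq, zpow_natCast, zpow_natCast]
    push_cast
    congr 1
    ring
  rw [sum_congr rfl term, ← sum_smul, ← mul_sum, ← add_pow, neg_add_eq_sub]

theorem isLocalPair_geomDistrib_iff (hμ : IsBilinear k μ) {r q : k} (hr : r ≠ 0) (hq : q ≠ 0)
    (x y : A) :
    IsLocalPair μ (geomDistrib r x) (geomDistrib q y) ↔ r = q ∨ μ x y = 0 := by
  simp only [IsLocalPair, binomial_sum_geomDistrib hμ hr hq]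
  constructor
  · rintro ⟨N, hN⟩
    have h00 := hN 0 0
    simp only [zpow_zero, one_mul, smul_eq_zero, pow_eq_zero_iff', sub_eq_zero] at h00
    exact h00.imp_left And.left
  · rintro (rfl | hxy)
    · exact ⟨1, fun m p => by simp⟩
    · exact ⟨0, fun m p => by simp [hxy]⟩

theorem nthProduct_geomDistrib (hμ : IsBilinear k μ) {r q : k} (hr : r ≠ 0) (hq : q ≠ 0)
    (x y : A) (n : ℕ) :
    NthProduct μ n (geomDistrib r x) (geomDistrib q y) = geomDistrib q ((r - q) ^ n • μ x y) := by
  funext m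
  have hsum := binomial_sum_geomDistrib hμ hr hq x y n 0 m
  simp only [zero_add, zpow_zero, one_mul] at hsum
  rw [NthProduct, hsum, geomDistrib, smul_smul]

end Geometric

def preLieMul {R : Type*} [CommRing R] (u v : R × R × R × R) : R × R × R × R :=
  (0, 0, u.1 * v.2.1 + u.2.1 * v.1, u.2.2.1 * v.2.2.2)

theorem preLieMul_leftSymmetric {R : Type*} [CommRing R] (x y z : R × R × R × R) :
    preLieMul (preLieMul x y) z - preLieMul x (preLieMul y z) =
      preLieMul (preLieMul y x) z - preLieMul y (preLieMul x z) := by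
  simp only [preLieMul, Prod.mk_sub_mk, Prod.mk.injEq]
  exact ⟨trivial, trivial, by ring, by ring⟩

theorem preLieMul_isBilinear {k : Type*} [Field k] : IsBilinear k (preLieMul (R := k)) := by
  refine ⟨fun x y z => ?_, fun x y z => ?_, fun r x y => ?_, fun r x y => ?_⟩ <;>
    simp only [preLieMul, Prod.fst_add, Prod.snd_add, Prod.smul_fst, Prod.smul_snd,
      Prod.mk_add_mk, Prod.smul_mk, Prod.mk.injEq, smul_eq_mul] <;>
    refine ⟨by simp, by simp, by ring, by ring⟩

/-- Pre-Lie (left-symmetric) algebras do not satisfy the Dong property. -/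
theorem preLie_not_dong_property :
    ∃ (A : Type) (_ : AddCommGroup A) (_ : Module ℚ A) (μ : A → A → A),
      IsBilinear ℚ μ ∧
      (∀ x y z : A, μ (μ x y) z - μ x (μ y z) = μ (μ y x) z - μ y (μ x z)) ∧
      ∃ a b c : ℤ → A, PairwiseMutuallyLocal μ a b c ∧
        ∃ n : ℕ,
          ¬ IsLocalPair μ (NthProduct μ n a b) c ∨
          ¬ IsLocalPair μ c (NthProduct μ n a b) := by
  have hμ := preLieMul_isBilinear (k := ℚ)
  refine ⟨ℚ × ℚ × ℚ × ℚ, inferInstance, inferInstance, preLieMul, hμ, preLieMul_leftSymmetric,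
    geomDistrib (2 : ℚ) (1, 0, 0, 0), geomDistrib (2 : ℚ) (0, 1, 0, 0),
    geomDistrib (1 : ℚ) (0, 0, 0, 1), ?_, 0, Or.inl ?_⟩
  · norm_num [PairwiseMutuallyLocal, isLocalPair_geomDistrib_iff hμ, preLieMul]
  · rw [nthProduct_geomDistrib hμ two_ne_zero two_ne_zero,
      isLocalPair_geomDistrib_iff hμ two_ne_zero one_ne_zero]
    norm_num [preLieMul]
end

section
/- Pre-associative (dendriform) algebras do not satisfy the Dong property: there exist a dendriform algebra A over ℚ with operations λ(x,y) = x ≺ y and ρ(x,y) = x ≻ y, pairwise mutually F-local formal distributions a, b, c over A for the family F = {λ, ρ}, an n ∈ ℕ, and operations μ, ν ∈ F such that at least one of the ordered pairs (a ∘_{μ,n} b, c), (c, a ∘_{μ,n} b) is not ν-local. -/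
/-!
Take `A = S⁵` with `S = ℚ[X^±1, Y^±1]`, `a(m) = X^m e₀`, `b(m) = X^m e₁`, `c(m) = Y^m e₂`, and
`x ≺ y = x₀ y₁ e₃`, `x ≻ y = x₃ y₂ e₄ - x₀ y₁ e₃`. Every triple product of `≺` or `≻` lies in
the span of `x₀ y₁ z₂ e₄`, where the two terms of the third dendriform axiom cancel, so `A` is
dendriform. The only nonzero products among `a, b, c` are
`a(i) ≺ b(j) = -(a(i) ≻ b(j)) = X^{i+j} e₃`, which depend on `i + j` only, so the three are
pairwise local. But `d = a ∘_{≺,0} b` is `d(m) = X^m e₃`, and the products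
`d(i) ≻ c(j) = X^i Y^j e₄` are linearly independent, so no power of `w - z` kills `d(w) ≻ c(z)`.
-/

section Locality

variable {A : Type*} [AddCommGroup A] {μ : A → A → A} {a b c : ℤ → A}

theorem IsLocalPair.of_forall_eq_zero (h : ∀ i j, μ (a i) (b j) = 0) : IsLocalPair μ a b :=
  ⟨0, fun m p => by simp [h]⟩

theorem IsLocalPair.of_forall_eq_add (f : ℤ → A) (h : ∀ i j, μ (a i) (b j) = f (i + j)) :
    IsLocalPair μ a b := by
  refine ⟨1, fun m p => ?_⟩
  simp [Finset.sum_range_succ, h]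

theorem PairwiseMutuallyLocal.of_forall_eq_add (f : ℤ → A)
    (hab : ∀ i j, μ (a i) (b j) = f (i + j)) (hba : ∀ i j, μ (b i) (a j) = 0)
    (hac : ∀ i j, μ (a i) (c j) = 0) (hca : ∀ i j, μ (c i) (a j) = 0)
    (hbc : ∀ i j, μ (b i) (c j) = 0) (hcb : ∀ i j, μ (c i) (b j) = 0) : PairwiseMutuallyLocal μ a b c :=
  ⟨.of_forall_eq_add f hab, .of_forall_eq_zero hba, .of_forall_eq_zero hac,
    .of_forall_eq_zero hca, .of_forall_eq_zero hbc, .of_forall_eq_zero hcb⟩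

theorem not_isLocalPair_of_coeff {R : Type*} [Ring R] [Nontrivial R]
    (π : A →+ (ℤ × ℤ →₀ R))
    (h : ∀ i j, π (μ (a i) (c j)) = Finsupp.single (i, j) 1) : ¬ IsLocalPair μ a c := by
  rintro ⟨N, hN⟩
  -- only the term `s = 0` has a nonzero coefficient at `(N, 0)`
  have hcoeff := congrArg ((Finsupp.applyAddHom ((N : ℤ), (0 : ℤ))).comp π) (hN 0 0)
  rw [map_sum, map_zero, Finset.sum_eq_single 0] at hcoeff
  · simp [h] at hcoeff
  · intro s _ hs
    simp [h, hs]
  · simp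

theorem nthProduct_zero (μ : A → A → A) (a b : ℤ → A) (m : ℤ) :
    NthProduct μ 0 a b m = μ (a 0) (b m) := by
  simp [NthProduct]

end Locality

section Bilinear

variable {k : Type*} [Field k]

theorem IsBilinear.sub {A : Type*} [AddCommGroup A] [Module k A] {μ ν : A → A → A}
    (hμ : IsBilinear k μ) (hν : IsBilinear k ν) : IsBilinear k (fun x y => μ x y - ν x y) := by
  obtain ⟨hμ₁, hμ₂, hμ₃, hμ₄⟩ := hμ
  obtain ⟨hν₁, hν₂, hν₃, hν₄⟩ := hν
  refine ⟨fun x y z => ?_, fun x y z => ?_, fun r x y => ?_, fun r x y => ?_⟩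
  · dsimp only; rw [hμ₁, hν₁]; abel
  · dsimp only; rw [hμ₂, hν₂]; abel
  · dsimp only; rw [hμ₃, hν₃, smul_sub]
  · dsimp only; rw [hμ₄, hν₄, smul_sub]

theorem isBilinear_single_mul {ι R : Type*} [DecidableEq ι] [Ring R] [Algebra k R]
    (i j l : ι) : IsBilinear k (fun x y : ι → R => Pi.single i (x j * y l)) := by
  refine ⟨fun x y z => ?_, fun x y z => ?_, fun r x y => ?_, fun r x y => ?_⟩ <;>
    simp [add_mul, mul_add, Pi.single_add, Pi.single_smul]

end Bilinear

noncomputable section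

namespace DendriformCounterexample

abbrev S : Type := AddMonoidAlgebra ℚ (ℤ × ℤ)

/-- The monomial `X ^ i * Y ^ j` of the Laurent polynomial ring `S = ℚ[X^±1, Y^±1]`. -/
def mono (i j : ℤ) : S := AddMonoidAlgebra.single (i, j) 1

theorem mono_mul_mono (i j k l : ℤ) : mono i j * mono k l = mono (i + k) (j + l) := by
  simp [mono, AddMonoidAlgebra.single_mul_single]

abbrev A : Type := Fin 5 → S

def leftOp (x y : A) : A := Pi.single 3 (x 0 * y 1)

def rightOp (x y : A) : A := Pi.single 4 (x 3 * y 2) - leftOp x y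

def a (m : ℤ) : A := Pi.single 0 (mono m 0)
def b (m : ℤ) : A := Pi.single 1 (mono m 0)
def c (m : ℤ) : A := Pi.single 2 (mono 0 m)
def d (m : ℤ) : A := Pi.single 3 (mono m 0)

theorem isBilinear_leftOp : IsBilinear ℚ leftOp :=
  isBilinear_single_mul 3 0 1

theorem isBilinear_rightOp : IsBilinear ℚ rightOp :=
  (isBilinear_single_mul 4 3 2).sub isBilinear_leftOp

theorem leftOp_leftOp (x y z : A) :
    leftOp (leftOp x y) z = leftOp x (leftOp y z) + leftOp x (rightOp y z) := by
  simp [leftOp, rightOp]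

theorem leftOp_rightOp (x y z : A) : leftOp (rightOp x y) z = rightOp x (leftOp y z) := by
  simp [leftOp, rightOp]

theorem rightOp_leftOp_add_rightOp_rightOp (x y z : A) :
    rightOp (leftOp x y) z + rightOp (rightOp x y) z = rightOp x (rightOp y z) := by
  simp [leftOp, rightOp, Pi.single_neg]

theorem leftOp_a_b (i j : ℤ) : leftOp (a i) (b j) = d (i + j) := by
  rw [leftOp]
  simp [a, b, d, mono_mul_mono]

theorem rightOp_a_b (i j : ℤ) : rightOp (a i) (b j) = -d (i + j) := by
  rw [rightOp, leftOp_a_b]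
  simp [a, b]

theorem pairwiseMutuallyLocal_leftOp : PairwiseMutuallyLocal leftOp a b c := by
  refine .of_forall_eq_add d leftOp_a_b ?_ ?_ ?_ ?_ ?_ <;>
    intro i j <;> rw [leftOp] <;> simp [a, b, c]

theorem pairwiseMutuallyLocal_rightOp : PairwiseMutuallyLocal rightOp a b c := by
  refine .of_forall_eq_add (fun k => -d k) rightOp_a_b ?_ ?_ ?_ ?_ ?_ <;>
    intro i j <;> rw [rightOp, leftOp] <;> simp [a, b, c]

theorem nthProduct_leftOp_a_b : NthProduct leftOp 0 a b = d := by
  ext1 m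
  rw [nthProduct_zero, leftOp_a_b, zero_add]

theorem rightOp_d_c (i j : ℤ) : rightOp (d i) (c j) = Pi.single 4 (mono i j) := by
  rw [rightOp, leftOp]
  simp [c, d, mono_mul_mono]

theorem not_isLocalPair_rightOp_d_c : ¬ IsLocalPair rightOp d c :=
  not_isLocalPair_of_coeff
    ((AddMonoidAlgebra.coeffAddEquiv (R := ℚ)).toAddMonoidHom.comp (Pi.evalAddMonoidHom _ 4))
    (by simp [rightOp_d_c, mono])

end DendriformCounterexample

end

/-- Pre-associative (dendriform) algebras do not satisfy the Dong property.
Here `l x y = x ≺ y` and `r x y = x ≻ y`. -/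
theorem dendriform_not_dong_property :
    ∃ (A : Type) (_ : AddCommGroup A) (_ : Module ℚ A) (l r : A → A → A),
      IsBilinear ℚ l ∧ IsBilinear ℚ r ∧
      (∀ x y z : A, l (l x y) z = l x (l y z) + l x (r y z)) ∧
      (∀ x y z : A, l (r x y) z = r x (l y z)) ∧
      (∀ x y z : A, r (l x y) z + r (r x y) z = r x (r y z)) ∧
      ∃ a b c : ℤ → A,
        (∀ μ ∈ ({l, r} : Set (A → A → A)), PairwiseMutuallyLocal μ a b c) ∧
        ∃ (n : ℕ) (μ ν : A → A → A), μ ∈ ({l, r} : Set (A → A → A)) ∧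
          ν ∈ ({l, r} : Set (A → A → A)) ∧
          (¬ IsLocalPair ν (NthProduct μ n a b) c ∨
           ¬ IsLocalPair ν c (NthProduct μ n a b)) := by
  open DendriformCounterexample in
  exact ⟨A, inferInstance, inferInstance, leftOp, rightOp, isBilinear_leftOp, isBilinear_rightOp,
    leftOp_leftOp, leftOp_rightOp, rightOp_leftOp_add_rightOp_rightOp, a, b, c,
    fun μ hμ => hμ.elim (· ▸ pairwiseMutuallyLocal_leftOp) (· ▸ pairwiseMutuallyLocal_rightOp),
    0, leftOp, rightOp, Or.inl rfl, Or.inr rfl,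
    Or.inl (nthProduct_leftOp_a_b ▸ not_isLocalPair_rightOp_d_c)⟩
end
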